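/- arXiv:1712.07060 — 10 statements merged into one kernel-verified Lean document; each statement's English description precedes it below -/
import Mathlib

section
/- Let f(x) = f_0 x + f_1 x^q + ... + f_{n-1} x^{q^{n-1}} be a linearized polynomial over F_{q^n} whose associated F_q-linear map on F_{q^n} has rank r ≥ 1. Then there exist two subsets S_1 = {a_1, ..., a_r} and S_2 = {b_1, ..., b_r} of F_{q^n}, each linearly independent over F_q, such that for every integer i with 0 ≤ i ≤ n−1, f_i = Σ_{j=1}^{r} b_j^{q^i} · a_j. -/
/-!
Write `q = #F_q`. Choosing a basis `a_1, …, a_r` of the image, `φ = Σ_j c_j(·) a_j` for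
`F_q`-linearly independent functionals `c_j`. The trace form of `F_{q^n}/F_q` is nondegenerate,
so `c_j(x) = Tr(b_j x) = Σ_i b_j^{q^i} x^{q^i}` for linearly independent `b_j`, and the
coefficients of `φ` as a `q`-polynomial can be read off because the Frobenius powers
`x ↦ x^{q^i}`, `i < n`, are distinct characters and hence linearly independent (Dedekind).
-/

open Module

theorem LinearMap.exists_linearIndependent_eq_sum_smul {K V W : Type*} [Field K]
    [AddCommGroup V] [Module K V] [FiniteDimensional K V] [AddCommGroup W] [Module K W]
    (φ : V →ₗ[K] W) {r : ℕ} (hr : finrank K (range φ) = r) :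
    ∃ (a : Fin r → W) (c : Fin r → Dual K V), LinearIndependent K a ∧ LinearIndependent K c ∧
      ∀ x, φ x = ∑ j, c j x • a j := by
  let β : Basis (Fin r) K (range φ) := finBasisOfFinrankEq K _ hr
  have hinj : Function.Injective φ.rangeRestrict.dualMap :=
    dualMap_injective_of_surjective φ.surjective_rangeRestrict
  refine ⟨(range φ).subtype ∘ β, φ.rangeRestrict.dualMap ∘ β.dualBasis,
    β.linearIndependent.map' _ (Submodule.ker_subtype _),
    β.dualBasis.linearIndependent.map' _ (ker_eq_bot.2 hinj), fun x ↦ ?_⟩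
  simp only [Function.comp_apply, dualMap_apply, Basis.dualBasis_apply, Submodule.coe_subtype]
  simp_rw [← Submodule.coe_smul_of_tower, ← Submodule.coe_sum, β.sum_repr]
  rfl

theorem Algebra.exists_linearIndependent_trace_mul_eq {K L ι : Type*} [Field K] [Field L]
    [Algebra K L] [FiniteDimensional K L] [Algebra.IsSeparable K L] {c : ι → Dual K L}
    (hc : LinearIndependent K c) :
    ∃ b : ι → L, LinearIndependent K b ∧ ∀ j x, trace K L (b j * x) = c j x := by
  let e := (traceForm K L).toDual (traceForm_nondegenerate K L)
  exact ⟨e.symm ∘ c, hc.map' _ e.symm.ker, fun j x ↦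
    LinearMap.BilinForm.apply_toDual_symm_apply (hB := traceForm_nondegenerate K L) (c j) x⟩

namespace FiniteField

variable (K L : Type*) [Field K] [Fintype K] [Field L] [Finite L] [Algebra K L]

theorem algebraMap_trace_eq_sum_fin_pow (x : L) :
    algebraMap K L (Algebra.trace K L x) =
      ∑ i : Fin (finrank K L), x ^ Fintype.card K ^ (i : ℕ) := by
  rw [algebraMap_trace_eq_sum_pow, Finset.sum_range, Nat.card_eq_fintype_card]

theorem linearIndependent_pow_card_pow :
    LinearIndependent L fun (i : Fin (finrank K L)) (x : L) ↦ x ^ Fintype.card K ^ (i : ℕ) := by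
  have hinj : Function.Injective fun i : Fin (finrank K L) ↦
      ((frobeniusAlgEquivOfAlgebraic K L ^ (i : ℕ) : Gal(L/K)) : L →* L) := fun i j hij ↦
    (bijective_frobeniusAlgEquivOfAlgebraic_pow K L).1 <| AlgEquiv.ext (DFunLike.congr_fun hij :)
  convert (linearIndependent_monoidHom L L).comp _ hinj using 1
  · ext i x
    simp [AlgEquiv.coe_pow, coe_frobeniusAlgEquivOfAlgebraic_iterate]
  · rfl

variable {K L}

theorem eq_of_forall_sum_mul_pow_card_pow_eq {g h : Fin (finrank K L) → L}
    (hgh : ∀ x : L, ∑ i, g i * x ^ Fintype.card K ^ (i : ℕ) =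
      ∑ i, h i * x ^ Fintype.card K ^ (i : ℕ)) : g = h :=
  funext <| Fintype.linearIndependent_iffₛ.1 (linearIndependent_pow_card_pow K L) g h <|
    funext fun x ↦ by simpa using hgh x

end FiniteField

theorem linearized_poly_coeff_decomposition_general
    (Fq Fqn : Type*) [Field Fq] [Fintype Fq] [Field Fqn] [Fintype Fqn]
    [Algebra Fq Fqn] (n r : ℕ) (hn : Module.finrank Fq Fqn = n)
    (f : Fin n → Fqn) (φ : Fqn →ₗ[Fq] Fqn)
    (hφ : ∀ x : Fqn, φ x = ∑ i : Fin n, f i * x ^ (Fintype.card Fq) ^ (i : ℕ))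
    (hrank : Module.finrank Fq (LinearMap.range φ) = r) :
    ∃ a b : Fin r → Fqn, LinearIndependent Fq a ∧ LinearIndependent Fq b ∧
      ∀ i : Fin n, f i = ∑ j : Fin r, b j ^ (Fintype.card Fq) ^ (i : ℕ) * a j := by
  subst hn
  obtain ⟨a, c, ha, hc, hφc⟩ := φ.exists_linearIndependent_eq_sum_smul hrank
  obtain ⟨b, hb, hbc⟩ := Algebra.exists_linearIndependent_trace_mul_eq hc
  refine ⟨a, b, ha, hb, congrFun (FiniteField.eq_of_forall_sum_mul_pow_card_pow_eq fun x ↦ ?_)⟩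
  calc ∑ i : Fin _, f i * x ^ Fintype.card Fq ^ (i : ℕ) = φ x := (hφ x).symm
    _ = ∑ j, algebraMap Fq Fqn (Algebra.trace Fq Fqn (b j * x)) * a j := by
      simp only [hφc, hbc, Algebra.smul_def]
    _ = ∑ i : Fin _, (∑ j, b j ^ Fintype.card Fq ^ (i : ℕ) * a j) * x ^ Fintype.card Fq ^ (i : ℕ) := by
      simp only [FiniteField.algebraMap_trace_eq_sum_fin_pow, mul_pow, Finset.sum_mul]
      rw [Finset.sum_comm]
      exact Finset.sum_congr rfl fun i _ ↦ Finset.sum_congr rfl fun j _ ↦ by ring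

/-- If the linearized polynomial `f(x) = Σ_{i<n} f_i x^{q^i}` over `F_{q^n}` induces an
`F_q`-linear map of rank `r ≥ 1`, then there are `F_q`-linearly independent families
`a_1,…,a_r` and `b_1,…,b_r` in `F_{q^n}` with `f_i = Σ_j b_j^{q^i} a_j` for all `i`. -/
theorem linearized_poly_coeff_decomposition
    (Fq Fqn : Type*) [Field Fq] [Fintype Fq] [Field Fqn] [Fintype Fqn]
    [Algebra Fq Fqn] (n r : ℕ) (hn : Module.finrank Fq Fqn = n) (hr : 1 ≤ r)
    (f : Fin n → Fqn) (φ : Fqn →ₗ[Fq] Fqn)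
    (hφ : ∀ x : Fqn, φ x = ∑ i : Fin n, f i * x ^ (Fintype.card Fq) ^ (i : ℕ))
    (hrank : Module.finrank Fq (LinearMap.range φ) = r) :
    ∃ a b : Fin r → Fqn, LinearIndependent Fq a ∧ LinearIndependent Fq b ∧
      ∀ i : Fin n, f i = ∑ j : Fin r, b j ^ (Fintype.card Fq) ^ (i : ℕ) * a j :=
  linearized_poly_coeff_decomposition_general Fq Fqn n r hn f φ hφ hrank
end

section
/- Let f(x) = f_0 x + f_1 x^q + ... + f_{n-1} x^{q^{n-1}} be a linearized polynomial over F_{q^n} of rank r ≥ 1, and let {a_1,...,a_r}, {b_1,...,b_r} be F_q-linearly independent subsets of F_{q^n} with f_i = Σ_{j=1}^{r} b_j^{q^i} a_j for all i. Then the Dickson matrix M of f factors as M = B·A, where B is the n×r matrix with entries B_{i,l} = b_l^{q^i} (0 ≤ i ≤ n−1, 1 ≤ l ≤ r) and A is the r×n matrix with entries A_{l,j} = a_l^{q^j} (1 ≤ l ≤ r, 0 ≤ j ≤ n−1). -/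
/-- If the linearized polynomial `f(x) = Σ_{i<n} f_i x^{q^i}` of rank `r ≥ 1` has
coefficient decomposition `f_i = Σ_j b_j^{q^i} a_j` with `{a_j}`, `{b_j}` each
`F_q`-linearly independent, then its Dickson matrix `M`, `M_{i,j} = f_{(i-j) mod n}^{q^j}`,
factors as `M = B·A` with `B_{i,l} = b_l^{q^i}` and `A_{l,j} = a_l^{q^j}`. -/
theorem dickson_matrix_factorization
    (Fq Fqn : Type*) [Field Fq] [Fintype Fq] [Field Fqn] [Fintype Fqn]
    [Algebra Fq Fqn] (n r : ℕ) (hn : Module.finrank Fq Fqn = n) (hr : 1 ≤ r)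
    (f : Fin n → Fqn) (φ : Fqn →ₗ[Fq] Fqn)
    (hφ : ∀ x : Fqn, φ x = ∑ i : Fin n, f i * x ^ (Fintype.card Fq) ^ (i : ℕ))
    (hrank : Module.finrank Fq (LinearMap.range φ) = r)
    (a b : Fin r → Fqn) (ha : LinearIndependent Fq a) (hb : LinearIndependent Fq b)
    (hcoeff : ∀ i : Fin n, f i = ∑ j : Fin r, b j ^ (Fintype.card Fq) ^ (i : ℕ) * a j) :
    (Matrix.of fun i j : Fin n => f (i - j) ^ (Fintype.card Fq) ^ (j : ℕ)) =
      (Matrix.of fun (i : Fin n) (l : Fin r) => b l ^ (Fintype.card Fq) ^ (i : ℕ)) *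
        (Matrix.of fun (l : Fin r) (j : Fin n) => a l ^ (Fintype.card Fq) ^ (j : ℕ)) := by
  classical
  set q := Fintype.card Fq with hq
  have hcardn : Fintype.card Fqn = q ^ n := by
    rw [← hn]; exact Module.card_eq_pow_finrank (K := Fq) (V := Fqn)
  have hxqn : ∀ x : Fqn, x ^ q ^ n = x := by
    intro x; rw [← hcardn]; exact FiniteField.pow_card x
  -- reduce exponents mod n
  have hred : ∀ (x : Fqn) (k : ℕ), x ^ q ^ k = x ^ q ^ (k % n) := by
    intro x k
    conv_lhs => rw [← Nat.mod_add_div k n]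
    generalize k / n = t
    induction t with
    | zero => simp
    | succ t ih =>
      have : k % n + n * (t + 1) = (k % n + n * t) + n := by ring
      rw [this, pow_add, pow_mul, hxqn, ih]
  -- characteristic setup
  obtain ⟨p, hc⟩ := CharP.exists Fq
  haveI := hc
  have hp : p.Prime := CharP.char_is_prime Fq p
  haveI := Fact.mk hp
  obtain ⟨m, hm⟩ := FiniteField.card Fq p
  have hqpm : q = p ^ (m : ℕ) := by rw [hq, hm.2]
  haveI : CharP Fqn p := charP_of_injective_algebraMap (algebraMap Fq Fqn).injective p
  ext i j
  -- ring hom raising to q^j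
  let ψ : Fqn →+* Fqn := iterateFrobenius Fqn p (m * (j : ℕ))
  have hψ : ∀ x : Fqn, ψ x = x ^ q ^ (j : ℕ) := by
    intro x
    rw [iterateFrobenius_def, hqpm, ← pow_mul]
  simp only [Matrix.mul_apply, Matrix.of_apply]
  rw [hcoeff (i - j), ← hψ, map_sum]
  refine Finset.sum_congr rfl fun l _ => ?_
  rw [map_mul, hψ, hψ, ← pow_mul]
  congr 1
  rw [← pow_add]
  have hval : ((i - j : Fin n) : ℕ) = ((i : ℕ) + (n - (j : ℕ))) % n := by
    rw [Fin.sub_def]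
    simp [Nat.add_comm]
  have key : (((i - j : Fin n) : ℕ) + (j : ℕ)) % n = (i : ℕ) % n := by
    rw [hval, Nat.mod_add_mod]
    have h2 : (i : ℕ) + (n - (j : ℕ)) + (j : ℕ) = (i : ℕ) + n := by
      have := j.isLt; omega
    rw [h2, Nat.add_mod_right]
  calc b l ^ q ^ (((i - j : Fin n) : ℕ) + (j : ℕ))
      = b l ^ q ^ ((((i - j : Fin n) : ℕ) + (j : ℕ)) % n) := hred _ _
    _ = b l ^ q ^ ((i : ℕ) % n) := by rw [key]
    _ = b l ^ q ^ ((i : ℕ)) := (hred _ _).symm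
end

section
/- Let f(x) = f_0 x + f_1 x^q + ... + f_{n-1} x^{q^{n-1}} be a linearized polynomial over F_{q^n} whose associated F_q-linear map has rank r. Then the Dickson matrix M of f, as a matrix over F_{q^n}, has rank r. -/
open Module Submodule Finset Matrix

section Aux

variable {Fq Fqn : Type*} [Field Fq] [Fintype Fq] [Field Fqn] [Fintype Fqn] [Algebra Fq Fqn]

private lemma dmr_sum_pow {ι : Type*} (s : Finset ι) (g : ι → Fqn) (j : ℕ) :
    (∑ i ∈ s, g i) ^ (Fintype.card Fq) ^ j = ∑ i ∈ s, g i ^ (Fintype.card Fq) ^ j := by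
  set p := ringChar Fq with hp
  haveI : CharP Fq p := ringChar.charP Fq
  obtain ⟨e, hpp, hqe⟩ := FiniteField.card Fq p
  haveI : CharP Fqn p := charP_of_injective_algebraMap (algebraMap Fq Fqn).injective p
  haveI : ExpChar Fqn p := .prime hpp
  rw [hqe, ← pow_mul]
  exact sum_pow_char_pow _ _ s g

private lemma dmr_pow_mod {n : ℕ} (hc : Fintype.card Fqn = (Fintype.card Fq) ^ n)
    (x : Fqn) (a : ℕ) : x ^ (Fintype.card Fq) ^ a = x ^ (Fintype.card Fq) ^ (a % n) := by
  have hn : n ≠ 0 := by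
    rintro rfl
    have := Fintype.one_lt_card (α := Fqn)
    simp [hc] at this
  induction a using Nat.strong_induction_on with
  | _ a ih =>
    rcases lt_or_ge a n with h | h
    · rw [Nat.mod_eq_of_lt h]
    · calc x ^ (Fintype.card Fq) ^ a
          = (x ^ (Fintype.card Fq) ^ (a - n)) ^ (Fintype.card Fq) ^ n := by
            rw [← pow_mul, ← pow_add, Nat.sub_add_cancel h]
        _ = x ^ (Fintype.card Fq) ^ (a - n) := by rw [← hc, FiniteField.pow_card]
        _ = x ^ (Fintype.card Fq) ^ ((a - n) % n) := ih _ (by omega)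
        _ = x ^ (Fintype.card Fq) ^ (a % n) := by rw [Nat.mod_eq_sub_mod h]

private lemma dmr_fixed {x : Fqn} (hx : x ^ (Fintype.card Fq) = x) :
    ∃ c : Fq, algebraMap Fq Fqn c = x := by
  classical
  set q := Fintype.card Fq with hq
  set S : Finset Fqn := Finset.univ.filter (fun y => y ^ q = y) with hS
  set T : Finset Fqn := Finset.univ.image (algebraMap Fq Fqn) with hT
  have hTS : T ⊆ S := by
    intro y hy
    simp only [hT, Finset.mem_image, Finset.mem_univ, true_and] at hy
    obtain ⟨c, rfl⟩ := hy
    simp only [hS, Finset.mem_filter, Finset.mem_univ, true_and]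
    rw [← map_pow, FiniteField.pow_card]
  have hTcard : T.card = q := by
    rw [hT, Finset.card_image_of_injective _ (algebraMap Fq Fqn).injective, Finset.card_univ]
  have hScard : S.card ≤ q := by
    have h1 : (Polynomial.X ^ q - Polynomial.X : Polynomial Fqn) ≠ 0 :=
      FiniteField.X_pow_card_sub_X_ne_zero Fqn Fintype.one_lt_card
    have h2 : S ⊆ (Polynomial.X ^ q - Polynomial.X : Polynomial Fqn).roots.toFinset := by
      intro y hy
      simp only [hS, Finset.mem_filter, Finset.mem_univ, true_and] at hy
      rw [Multiset.mem_toFinset, Polynomial.mem_roots h1]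
      simp [Polynomial.IsRoot, sub_eq_zero, hy]
    calc S.card ≤ _ := Finset.card_le_card h2
      _ ≤ (Polynomial.X ^ q - Polynomial.X : Polynomial Fqn).roots.card :=
          Multiset.toFinset_card_le _
      _ ≤ (Polynomial.X ^ q - Polynomial.X : Polynomial Fqn).natDegree :=
          Polynomial.card_roots' _
      _ = q := FiniteField.X_pow_card_sub_X_natDegree_eq Fqn Fintype.one_lt_card
  have hST : T = S := Finset.eq_of_subset_of_card_le hTS (hScard.trans hTcard.ge)
  have hxS : x ∈ S := by
    simp only [hS, Finset.mem_filter, Finset.mem_univ, true_and]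
    exact hx
  rw [← hST] at hxS
  simp only [hT, Finset.mem_image, Finset.mem_univ, true_and] at hxS
  exact hxS

private lemma dmr_moore_li {n : ℕ} (hc : Fintype.card Fqn = (Fintype.card Fq) ^ n)
    {ι : Type*} [Fintype ι] {v : ι → Fqn} (hv : LinearIndependent Fq v) :
    LinearIndependent Fqn (fun k => (fun j : Fin n => v k ^ (Fintype.card Fq) ^ (j : ℕ))) := by
  classical
  set q := Fintype.card Fq with hq
  have hn : 0 < n := by
    rcases Nat.eq_zero_or_pos n with h | h
    · subst h
      have := Fintype.one_lt_card (α := Fqn)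
      simp [hc] at this
    · exact h
  rw [Fintype.linearIndependent_iff]
  intro g hg
  have hrel0 : ∀ j : Fin n, ∑ k, g k * v k ^ q ^ (j : ℕ) = 0 := by
    intro j
    have := congrFun hg j
    simpa [Finset.sum_apply] using this
  have hrel : ∀ j : ℕ, ∑ k, g k * v k ^ q ^ j = 0 := by
    intro j
    have h0 := hrel0 ⟨j % n, Nat.mod_lt _ hn⟩
    calc ∑ k, g k * v k ^ q ^ j = ∑ k, g k * v k ^ q ^ (j % n) :=
          Finset.sum_congr rfl fun k _ => by rw [dmr_pow_mod hc]
      _ = 0 := h0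
  suffices key : ∀ N (g : ι → Fqn), (Finset.univ.filter (g · ≠ 0)).card ≤ N →
      (∀ j : ℕ, ∑ k, g k * v k ^ q ^ j = 0) → ∀ k, g k = 0 by
    exact key (Fintype.card ι) g
      ((Finset.card_le_card (Finset.subset_univ _)).trans Finset.card_univ.le) hrel
  intro N
  induction N with
  | zero =>
    intro g hcard hrel k
    by_contra hk
    have hmem : k ∈ Finset.univ.filter (g · ≠ 0) := by simp [hk]
    have := Finset.card_pos.mpr ⟨k, hmem⟩
    omega
  | succ N ih =>
    intro g hcard hrel k₀
    by_contra hk0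
    set h : ι → Fqn := fun i => g i * (g k₀)⁻¹ with hh
    have hrel' : ∀ j : ℕ, ∑ i, h i * v i ^ q ^ j = 0 := by
      intro j
      calc ∑ i, h i * v i ^ q ^ j = (∑ i, g i * v i ^ q ^ j) * (g k₀)⁻¹ := by
            rw [Finset.sum_mul]
            refine Finset.sum_congr rfl fun i _ => ?_
            show g i * (g k₀)⁻¹ * v i ^ q ^ j = _
            ring
        _ = 0 := by rw [hrel j, zero_mul]
    have hk1 : h k₀ = 1 := mul_inv_cancel₀ hk0
    set h' : ι → Fqn := fun i => h i ^ q - h i with hh'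
    have hrel'' : ∀ j : ℕ, ∑ i, h' i * v i ^ q ^ j = 0 := by
      intro j
      have hvq : ∀ i, v i ^ q ^ j = (v i ^ q ^ (j + n - 1)) ^ q := by
        intro i
        rw [← pow_mul, ← pow_succ]
        have he : j + n - 1 + 1 = j + n := by omega
        rw [he, dmr_pow_mod hc (v i) (j + n), dmr_pow_mod hc (v i) j, Nat.add_mod_right]
      have e1 : ∑ i, h i ^ q * v i ^ q ^ j = 0 := by
        have hsum := dmr_sum_pow (Fq := Fq) Finset.univ
          (fun i => h i * v i ^ q ^ (j + n - 1)) 1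
        calc ∑ i, h i ^ q * v i ^ q ^ j
            = ∑ i, (h i * v i ^ q ^ (j + n - 1)) ^ q := by
              refine Finset.sum_congr rfl fun i _ => ?_
              rw [hvq i, ← mul_pow]
          _ = (∑ i, h i * v i ^ q ^ (j + n - 1)) ^ q := by
              rw [← hq] at hsum
              simpa [pow_one] using hsum.symm
          _ = 0 ^ q := by rw [hrel' (j + n - 1)]
          _ = 0 := zero_pow Fintype.card_ne_zero
      calc ∑ i, h' i * v i ^ q ^ j
          = ∑ i, (h i ^ q * v i ^ q ^ j - h i * v i ^ q ^ j) := by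
            refine Finset.sum_congr rfl fun i _ => ?_
            show (h i ^ q - h i) * v i ^ q ^ j = _
            ring
        _ = 0 := by rw [Finset.sum_sub_distrib, e1, hrel' j, sub_zero]
    have hsub : Finset.univ.filter (h' · ≠ 0) ⊆ (Finset.univ.filter (g · ≠ 0)).erase k₀ := by
      intro i hi
      simp only [Finset.mem_filter, Finset.mem_univ, true_and] at hi
      rw [Finset.mem_erase, Finset.mem_filter]
      refine ⟨?_, Finset.mem_univ i, ?_⟩
      · rintro rfl
        apply hi
        show h i ^ q - h i = 0
        rw [hk1, one_pow, sub_self]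
      · intro hgi
        apply hi
        have h0 : h i = 0 := by
          show g i * (g k₀)⁻¹ = 0
          rw [hgi, zero_mul]
        show h i ^ q - h i = 0
        rw [h0, zero_pow Fintype.card_ne_zero, sub_zero]
    have hcard' : (Finset.univ.filter (h' · ≠ 0)).card ≤ N := by
      have h1 : k₀ ∈ Finset.univ.filter (g · ≠ 0) := by simp [hk0]
      have h2 := Finset.card_erase_of_mem h1
      have h3 := Finset.card_le_card hsub
      omega
    have hfix : ∀ i, h i ^ q = h i := by
      intro i
      have h2 : h i ^ q - h i = 0 := ih h' hcard' hrel'' i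
      rwa [sub_eq_zero] at h2
    choose c hcmap using fun i => dmr_fixed (hfix i)
    have hczero : ∑ i, c i • v i = 0 := by
      have h0 := hrel' 0
      simp only [pow_zero, pow_one] at h0
      calc ∑ i, c i • v i = ∑ i, h i * v i :=
            Finset.sum_congr rfl fun i _ => by rw [Algebra.smul_def, hcmap]
        _ = 0 := h0
    have hc0 := (Fintype.linearIndependent_iff.mp hv) c hczero k₀
    have : (0 : Fqn) = 1 := by
      rw [← map_zero (algebraMap Fq Fqn), ← hc0, hcmap, hk1]
    exact zero_ne_one this

private lemma dmr_moore_span {n : ℕ} (hc : Fintype.card Fqn = (Fintype.card Fq) ^ n)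
    {ι : Type*} [Fintype ι] (v : ι → Fqn) :
    finrank Fqn (span Fqn
        (Set.range fun k => fun j : Fin n => v k ^ (Fintype.card Fq) ^ (j : ℕ)))
      = finrank Fq (span Fq (Set.range v)) := by
  classical
  set q := Fintype.card Fq with hq
  obtain ⟨b, hbsub, hbspan, hbli⟩ := exists_linearIndependent Fq (Set.range v)
  haveI : Fintype b := (Set.toFinite b).fintype
  set μ : Fqn → (Fin n → Fqn) := fun x => fun j : Fin n => x ^ q ^ (j : ℕ) with hμ
  have hadd : ∀ x y : Fqn, μ (x + y) = μ x + μ y := by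
    intro x y
    funext j
    have := dmr_sum_pow (Fq := Fq) Finset.univ (fun t : Fin 2 => if t = 0 then x else y) (j : ℕ)
    simpa [Fin.sum_univ_two, hμ, hq] using this
  have hsmul : ∀ (cc : Fq) (x : Fqn), μ (cc • x) = cc • μ x := by
    intro cc x
    funext j
    simp only [hμ, Pi.smul_apply]
    rw [Algebra.smul_def, Algebra.smul_def, mul_pow, ← map_pow, FiniteField.pow_card_pow]
  let μₗ : Fqn →ₗ[Fq] (Fin n → Fqn) :=
    { toFun := μ, map_add' := hadd, map_smul' := hsmul }
  have h1 : span Fqn (Set.range fun k => μ (v k)) = span Fqn (μ '' b) := by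
    apply le_antisymm
    · rw [span_le]
      rintro _ ⟨k, rfl⟩
      have hvk : v k ∈ span Fq b := hbspan ▸ subset_span (Set.mem_range_self k)
      have hmem : μ (v k) ∈ (span Fq b).map μₗ := Submodule.mem_map_of_mem hvk
      rw [← Submodule.span_image] at hmem
      have hle := span_le_restrictScalars Fq Fqn (μ '' b)
      exact hle hmem
    · apply span_mono
      rintro _ ⟨x, hx, rfl⟩
      obtain ⟨k, hk⟩ := hbsub hx
      exact ⟨k, by show μ (v k) = μ x; rw [hk]⟩
  have hli2 : LinearIndependent Fqn (fun x : b => μ (x : Fqn)) := dmr_moore_li hc hbli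
  have h2 : μ '' b = Set.range (fun x : b => μ (x : Fqn)) := Set.image_eq_range μ b
  rw [show (Set.range fun k => fun j : Fin n => v k ^ q ^ (j : ℕ))
        = Set.range fun k => μ (v k) from rfl,
      h1, h2, finrank_span_eq_card hli2, ← hbspan, finrank_span_set_eq_card hbli,
      Set.toFinset_card]

end Aux

/-- The Dickson matrix `M`, `M_{i,j} = f_{(i-j) mod n}^{q^j}`, of a linearized polynomial
`f(x) = Σ_{i<n} f_i x^{q^i}` over `F_{q^n}` of rank `r` has rank `r` as a matrix over `F_{q^n}`. -/
theorem dickson_matrix_rank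
    (Fq Fqn : Type*) [Field Fq] [Fintype Fq] [Field Fqn] [Fintype Fqn]
    [Algebra Fq Fqn] (n r : ℕ) (hn : Module.finrank Fq Fqn = n)
    (f : Fin n → Fqn) (φ : Fqn →ₗ[Fq] Fqn)
    (hφ : ∀ x : Fqn, φ x = ∑ i : Fin n, f i * x ^ (Fintype.card Fq) ^ (i : ℕ))
    (hrank : Module.finrank Fq (LinearMap.range φ) = r) :
    (Matrix.of fun i j : Fin n => f (i - j) ^ (Fintype.card Fq) ^ (j : ℕ)).rank = r := by
  classical
  have hc : Fintype.card Fqn = (Fintype.card Fq) ^ n := by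
    rw [← hn]; exact card_eq_pow_finrank
  set q := Fintype.card Fq with hq
  let α : Basis (Fin n) Fq Fqn := Module.finBasisOfFinrankEq Fq Fqn hn
  set M : Matrix (Fin n) (Fin n) Fqn :=
    Matrix.of fun i j : Fin n => f (i - j) ^ q ^ (j : ℕ) with hM
  set A : Matrix (Fin n) (Fin n) Fqn :=
    Matrix.of fun j k : Fin n => α k ^ q ^ (j : ℕ) with hA
  set W : Matrix (Fin n) (Fin n) Fqn :=
    Matrix.of fun j k : Fin n => φ (α k) ^ q ^ (j : ℕ) with hW
  haveI : NeZero n := ⟨by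
    rintro rfl
    have := Fintype.one_lt_card (α := Fqn)
    simp [hc] at this⟩
  have hAunit : IsUnit A.det := by
    rw [← Matrix.isUnit_iff_isUnit_det, ← Matrix.linearIndependent_cols_iff_isUnit]
    exact dmr_moore_li hc α.linearIndependent
  have hMW : Mᵀ * A = W := by
    ext j k
    rw [Matrix.mul_apply]
    have hWjk : W j k = ∑ i : Fin n, f i ^ q ^ (j : ℕ) * α k ^ q ^ ((i : ℕ) + (j : ℕ)) := by
      show φ (α k) ^ q ^ (j : ℕ) = _
      rw [hφ, dmr_sum_pow]
      exact Finset.sum_congr rfl fun i _ => by rw [mul_pow, ← pow_mul, ← pow_add]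
    rw [hWjk]
    refine (Fintype.sum_equiv (Equiv.addRight j) _ _ fun i => ?_).symm
    show f i ^ q ^ (j : ℕ) * α k ^ q ^ ((i : ℕ) + (j : ℕ))
        = f (i + j - j) ^ q ^ (j : ℕ) * α k ^ q ^ ((i + j : Fin n) : ℕ)
    rw [add_sub_cancel_right, Fin.val_add, dmr_pow_mod hc (α k) ((i : ℕ) + (j : ℕ))]
  have h5 : span Fq (Set.range (φ ∘ α)) = LinearMap.range φ := by
    rw [Set.range_comp, Submodule.span_image, Basis.span_eq, Submodule.map_top]
  calc M.rank = (Mᵀ * A).rank := by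
        rw [Matrix.rank_mul_eq_left_of_isUnit_det A Mᵀ hAunit, Matrix.rank_transpose]
    _ = W.rank := by rw [hMW]
    _ = finrank Fqn (span Fqn
          (Set.range fun k => fun j : Fin n => (φ ∘ α) k ^ q ^ (j : ℕ))) :=
        Matrix.rank_eq_finrank_span_cols W
    _ = finrank Fq (span Fq (Set.range (φ ∘ α))) := dmr_moore_span hc (φ ∘ α)
    _ = r := by rw [h5, hrank]
end

section
/- Let f(x) = f_0 x + f_1 x^q + ... + f_{n-1} x^{q^{n-1}} be a linearized polynomial over F_{q^n} of rank r ≥ 1, and let M be its Dickson matrix with rows M_0, ..., M_{n-1}. Then for every index i, the r cyclically successive rows M_{i mod n}, M_{(i+1) mod n}, ..., M_{(i+r-1) mod n} are linearly independent over F_{q^n}, and every row of M lies in their F_{q^n}-linear span. -/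
/-!
Left multiplication by the invertible Moore matrix `(b_k ^ q ^ j)` of an `F_q`-basis `b` turns the
Dickson matrix `M` of `f` into the matrix with rows `(f(b_k) ^ q ^ j)_j`. Moore vectors of
`F_q`-independent elements are `F_{q^n}`-independent, so `M` has rank `r = dim_{F_q} im f`.
The rows satisfy `M_{m+1} = T M_m` for the Frobenius-semilinear map `T v = (v_{j-1} ^ q)_j`; hence
once a row lies in the span of the rows preceding it cyclically, so do all later rows. Therefore
any `r` cyclically successive rows are independent and span the row space.
-/

open Module Submodule Set FiniteField

section SemilinearOrbit

theorem range_fin_eq_image_Iio {α : Type*} (ρ : ℕ → α) (m : ℕ) :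
    range (fun s : Fin m => ρ s) = ρ '' Iio m := by
  rw [← Fin.range_val, ← range_comp]
  rfl

variable {K V : Type*} [Field K] [AddCommGroup V] [Module K V]

theorem linearIndependent_fin_of_forall_notMem_span {ρ : ℕ → V} {m : ℕ}
    (h : ∀ j < m, ρ j ∉ span K (ρ '' Iio j)) :
    LinearIndependent K (fun s : Fin m => ρ s) := by
  induction m with
  | zero => exact linearIndependent_empty_type
  | succ m ih =>
    have hsnoc : (fun s : Fin (m + 1) => ρ s) = Fin.snoc (fun s : Fin m => ρ s) (ρ m) := by
      ext s : 1
      refine Fin.lastCases ?_ (fun s => ?_) s <;> simp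
    rw [hsnoc, linearIndependent_finSnoc, range_fin_eq_image_Iio]
    exact ⟨ih fun j hj => h j (by omega), h m m.lt_succ_self⟩

variable {σ : K →+* K} {T : V →ₛₗ[σ] V} {ρ : ℕ → V}

/-- `T` maps `ρ '' Iio k` into `ρ '' Iic k`, whose span is that of `ρ '' Iio k` by `hk`. -/
theorem mem_span_image_Iio_of_mem (hρ : ∀ t, ρ (t + 1) = T (ρ t)) {k : ℕ}
    (hk : ρ k ∈ span K (ρ '' Iio k)) (t : ℕ) : ρ t ∈ span K (ρ '' Iio k) := by
  have hIic : span K (ρ '' Iic k) = span K (ρ '' Iio k) := by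
    rw [← Iio_insert, image_insert_eq, span_insert_eq_span hk]
  rw [← hIic]
  induction t with
  | zero => exact subset_span (mem_image_of_mem ρ (Nat.zero_le k))
  | succ t ih =>
    rw [hρ]
    refine span_mono ?_ (image_span_subset_span T _ (mem_image_of_mem T (hIic ▸ ih)))
    rintro _ ⟨_, ⟨s, hs, rfl⟩, rfl⟩
    exact ⟨s + 1, Nat.add_one_le_iff.2 hs, hρ s⟩

theorem linearIndependent_and_span_eq_of_finrank_span_orbit [FiniteDimensional K V]
    (hρ : ∀ t, ρ (t + 1) = T (ρ t)) {d : ℕ} (hd : finrank K (span K (range ρ)) = d) :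
    LinearIndependent K (fun s : Fin d => ρ s) ∧
      span K (range fun s : Fin d => ρ s) = span K (range ρ) := by
  classical
  have hex : ∃ k, ρ k ∈ span K (ρ '' Iio k) := by
    by_contra! h
    simpa using (linearIndependent_fin_of_forall_notMem_span (m := finrank K V + 1)
      fun j _ => h j).fintype_card_le_finrank
  obtain ⟨k, hk, hmin⟩ : ∃ k, ρ k ∈ span K (ρ '' Iio k) ∧
      ∀ j < k, ρ j ∉ span K (ρ '' Iio j) :=
    ⟨Nat.find hex, Nat.find_spec hex, fun _ => Nat.find_min hex⟩
  have hli := linearIndependent_fin_of_forall_notMem_span hmin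
  have hspan : span K (range fun s : Fin k => ρ s) = span K (range ρ) := by
    rw [range_fin_eq_image_Iio]
    refine le_antisymm (span_mono (image_subset_range _ _)) (span_le.2 ?_)
    rintro _ ⟨t, rfl⟩
    exact mem_span_image_Iio_of_mem hρ hk t
  obtain rfl : k = d := by rw [← hd, ← hspan, finrank_span_eq_card hli, Fintype.card_fin]
  exact ⟨hli, hspan⟩

end SemilinearOrbit

section Moore

variable {Fq Fqn : Type*} [Field Fq] [Fintype Fq] [Field Fqn] [Algebra Fq Fqn]

theorem frobeniusAlgHom_pow_apply (j : ℕ) (x : Fqn) :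
    (frobeniusAlgHom Fq Fqn ^ j) x = x ^ Fintype.card Fq ^ j := by
  rw [AlgHom.coe_pow, coe_frobeniusAlgHom, pow_iterate]

variable (Fq Fqn) in
/-- `x ↦ (x, x ^ q, …, x ^ q ^ (n - 1))`, the rows of a Moore matrix. -/
noncomputable def mooreMap (n : ℕ) : Fqn →ₗ[Fq] (Fin n → Fqn) :=
  LinearMap.pi fun j => (frobeniusAlgHom Fq Fqn ^ (j : ℕ)).toLinearMap

theorem mooreMap_apply (n : ℕ) (x : Fqn) (j : Fin n) :
    mooreMap Fq Fqn n x j = x ^ Fintype.card Fq ^ (j : ℕ) :=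
  frobeniusAlgHom_pow_apply _ x

variable [Finite Fqn]

theorem pow_card_pow_mod {n : ℕ} (hn : finrank Fq Fqn = n) (x : Fqn) (a : ℕ) :
    x ^ Fintype.card Fq ^ (a % n) = x ^ Fintype.card Fq ^ a := by
  rw [← hn, ← frobeniusAlgHom_pow_apply, ← orderOf_frobeniusAlgHom, pow_mod_orderOf,
    frobeniusAlgHom_pow_apply]

/-- The columns of the Moore matrix of a basis are the powers of the Frobenius evaluated on the
basis, which are independent by Dedekind's independence of characters. -/
theorem linearIndependent_mooreMap_basis {n : ℕ} (hn : finrank Fq Fqn = n)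
    (b : Basis (Fin n) Fq Fqn) : LinearIndependent Fqn fun k => mooreMap Fq Fqn n (b k) := by
  subst hn
  have hcols : (Matrix.of fun k => mooreMap Fq Fqn (finrank Fq Fqn) (b k)).col =
      (b.constr Fqn).symm.toLinearMap ∘ AlgHom.toLinearMap ∘
        fun j : Fin _ => frobeniusAlgHom Fq Fqn ^ (j : ℕ) := by
    ext j k
    simp [mooreMap]
  have hli := ((linearIndependent_toLinearMap Fq Fqn Fqn).comp _
    (bijective_frobeniusAlgHom_pow Fq Fqn).injective).map' _ (b.constr Fqn).symm.ker
  rw [← hcols] at hli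
  exact Matrix.linearIndependent_rows_iff_isUnit.2 (Matrix.linearIndependent_cols_iff_isUnit.1 hli)

theorem LinearIndependent.mooreMap_comp {n : ℕ} (hn : finrank Fq Fqn = n) {ι : Type*}
    {w : ι → Fqn} (hw : LinearIndependent Fq w) :
    LinearIndependent Fqn (mooreMap Fq Fqn n ∘ w) := by
  have : FiniteDimensional Fq Fqn := .of_finite
  let b := finBasisOfFinrankEq Fq Fqn hn
  have hcoords : LinearIndependent Fqn fun s => algebraMap Fq Fqn ∘ b.equivFun (w s) :=
    linearIndependent_algebraMap_comp_iff.2 (hw.map' _ b.equivFun.ker)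
  have hinj := (linearIndependent_mooreMap_basis hn b).fintypeLinearCombination_injective
  have hfactor : mooreMap Fq Fqn n ∘ w = Fintype.linearCombination Fqn
      (fun k => mooreMap Fq Fqn n (b k)) ∘ fun s => algebraMap Fq Fqn ∘ b.equivFun (w s) := by
    ext s : 1
    simp only [Function.comp_apply, Fintype.linearCombination_apply, algebraMap_smul, ← map_smul,
      ← map_sum, b.sum_equivFun]
  rw [hfactor]
  exact hcoords.map' _ (LinearMap.ker_eq_bot.2 hinj)

theorem finrank_span_mooreMap_image {n : ℕ} (hn : finrank Fq Fqn = n) (S : Set Fqn) :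
    finrank Fqn (span Fqn (mooreMap Fq Fqn n '' S)) = finrank Fq (span Fq S) := by
  have : FiniteDimensional Fq Fqn := .of_finite
  let v : Fin _ → Fqn := fun i => finBasis Fq (span Fq S) i
  have hv : LinearIndependent Fq v := (finBasis Fq (span Fq S)).linearIndependent.map'
    (span Fq S).subtype (span Fq S).ker_subtype
  have hspan : span Fq (range v) = span Fq S := by
    rw [range_comp' Subtype.val, ← coe_subtype, ← map_span, Basis.span_eq, Submodule.map_top,
      range_subtype]
  have hspan_tower (T : Set Fqn) :
      span Fqn (mooreMap Fq Fqn n '' T) = span Fqn (map (mooreMap Fq Fqn n) (span Fq T)) := by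
    rw [map_span, span_span_of_tower]
  rw [hspan_tower, ← hspan, ← hspan_tower, ← range_comp,
    finrank_span_eq_card (hv.mooreMap_comp hn), Fintype.card_fin, hspan]

end Moore

section Dickson

open scoped Matrix

variable {Fq Fqn : Type*} [Field Fq] [Fintype Fq] [Field Fqn] [Algebra Fq Fqn] {n : ℕ}

variable (Fq) in
def dicksonMatrix (f : Fin n → Fqn) : Matrix (Fin n) (Fin n) Fqn :=
  Matrix.of fun i j => f (i - j) ^ Fintype.card Fq ^ (j : ℕ)

variable (Fq Fqn n) in
def cyclicFrobeniusShift [NeZero n] :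
    (Fin n → Fqn) →ₛₗ[(frobeniusAlgHom Fq Fqn : Fqn →+* Fqn)] (Fin n → Fqn) where
  toFun v j := frobeniusAlgHom Fq Fqn (v (j - 1))
  map_add' v w := by ext j; exact map_add _ _ _
  map_smul' c v := by ext j; exact map_mul _ _ _

variable [Finite Fqn] (hn : finrank Fq Fqn = n) (f : Fin n → Fqn)
include hn

theorem dicksonMatrix_add_one [NeZero n] (m : Fin n) :
    dicksonMatrix Fq f (m + 1) = cyclicFrobeniusShift Fq Fqn n (dicksonMatrix Fq f m) := by
  ext j
  have hj : (((j - 1 : Fin n) : ℕ) + 1) % n = j := by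
    rw [← Nat.add_mod_mod, ← Fin.val_one', ← Fin.val_add, sub_add_cancel]
  simp only [dicksonMatrix, cyclicFrobeniusShift, Matrix.of_apply, LinearMap.coe_mk,
    AddHom.coe_mk, coe_frobeniusAlgHom]
  rw [sub_sub_eq_add_sub, ← pow_mul, ← pow_succ, ← hj, pow_card_pow_mod hn]

theorem mooreMap_vecMul_dicksonMatrix {φ : Fqn →ₗ[Fq] Fqn}
    (hφ : ∀ x, φ x = ∑ i, f i * x ^ Fintype.card Fq ^ (i : ℕ)) (x : Fqn) :
    mooreMap Fq Fqn n x ᵥ* dicksonMatrix Fq f = mooreMap Fq Fqn n (φ x) := by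
  have : NeZero n := ⟨hn ▸ finrank_pos.ne'⟩
  ext j
  simp only [Matrix.vecMul, dotProduct, mooreMap_apply, dicksonMatrix, Matrix.of_apply]
  rw [hφ, ← frobeniusAlgHom_pow_apply, map_sum]
  refine (Fintype.sum_equiv (Equiv.addRight j) _ _ fun m => ?_).symm
  rw [Equiv.coe_addRight, add_sub_cancel_right, map_mul, frobeniusAlgHom_pow_apply,
    frobeniusAlgHom_pow_apply, Fin.val_add, pow_card_pow_mod hn, pow_add, pow_mul, mul_comm]

theorem rank_dicksonMatrix {φ : Fqn →ₗ[Fq] Fqn}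
    (hφ : ∀ x, φ x = ∑ i, f i * x ^ Fintype.card Fq ^ (i : ℕ)) :
    (dicksonMatrix Fq f).rank = finrank Fq (LinearMap.range φ) := by
  have : FiniteDimensional Fq Fqn := .of_finite
  let b := finBasisOfFinrankEq Fq Fqn hn
  let A : Matrix (Fin n) (Fin n) Fqn := Matrix.of fun k => mooreMap Fq Fqn n (b k)
  have hA : IsUnit A.det := (Matrix.isUnit_iff_isUnit_det A).1
    (Matrix.linearIndependent_rows_iff_isUnit.1 (linearIndependent_mooreMap_basis hn b))
  have hrows : range (A * dicksonMatrix Fq f).row = mooreMap Fq Fqn n '' range (φ ∘ b) := by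
    rw [← range_comp]
    congr 1
    ext k : 1
    exact mooreMap_vecMul_dicksonMatrix hn f hφ (b k)
  rw [← Matrix.rank_mul_eq_right_of_isUnit_det A _ hA, Matrix.rank_eq_finrank_span_row, hrows,
    finrank_span_mooreMap_image hn, range_comp, ← map_span, b.span_eq, Submodule.map_top]

end Dickson

theorem dickson_matrix_successive_rows_general
    (Fq Fqn : Type*) [Field Fq] [Fintype Fq] [Field Fqn] [Fintype Fqn]
    [Algebra Fq Fqn] (n r : ℕ) (hn : Module.finrank Fq Fqn = n)
    (f : Fin n → Fqn) (φ : Fqn →ₗ[Fq] Fqn)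
    (hφ : ∀ x : Fqn, φ x = ∑ i : Fin n, f i * x ^ (Fintype.card Fq) ^ (i : ℕ))
    (hrank : Module.finrank Fq (LinearMap.range φ) = r) :
    let M : Matrix (Fin n) (Fin n) Fqn :=
      Matrix.of fun i j : Fin n => f (i - j) ^ (Fintype.card Fq) ^ (j : ℕ)
    ∀ i : Fin n,
      LinearIndependent Fqn
        (fun s : Fin r => M ⟨((i : ℕ) + (s : ℕ)) % n, Nat.mod_lt _ i.pos⟩) ∧
      ∀ m : Fin n, M m ∈ Submodule.span Fqn
        (Set.range fun s : Fin r => M ⟨((i : ℕ) + (s : ℕ)) % n, Nat.mod_lt _ i.pos⟩) := by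
  intro M i
  have : NeZero n := ⟨i.pos.ne'⟩
  let ρ : ℕ → Fin n → Fqn := fun t => M ⟨((i : ℕ) + t) % n, Nat.mod_lt _ i.pos⟩
  have hρ (t : ℕ) : ρ (t + 1) = cyclicFrobeniusShift Fq Fqn n (ρ t) := by
    have hidx : (⟨((i : ℕ) + (t + 1)) % n, Nat.mod_lt _ i.pos⟩ : Fin n) =
        ⟨((i : ℕ) + t) % n, Nat.mod_lt _ i.pos⟩ + 1 :=
      Fin.ext (by rw [Fin.val_add, Fin.val_one', ← Nat.add_mod, add_assoc])
    exact (congrArg M hidx).trans (dicksonMatrix_add_one hn f _)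
  have hrange : range ρ = range M :=
    Function.Surjective.range_comp (g := M)
      (f := fun t : ℕ => (⟨((i : ℕ) + t) % n, Nat.mod_lt _ i.pos⟩ : Fin n))
      (fun m => ⟨(m - i : Fin n), Fin.ext (by
        show ((i : ℕ) + (m - i : Fin n)) % n = m
        rw [← Fin.val_add, add_sub_cancel])⟩)
  have hfinrank : finrank Fqn (span Fqn (range ρ)) = r := by
    rw [hrange, ← hrank, ← rank_dicksonMatrix hn f hφ]
    exact (Matrix.rank_eq_finrank_span_row _).symm
  obtain ⟨hli, hspan⟩ := linearIndependent_and_span_eq_of_finrank_span_orbit hρ hfinrank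
  rw [hspan, hrange]
  exact ⟨hli, fun m => subset_span (mem_range_self m)⟩

/-- For a linearized polynomial `f` of rank `r ≥ 1` with Dickson matrix `M`
(`M_{i,j} = f_{(i-j) mod n}^{q^j}`): for every index `i`, the `r` cyclically successive rows
`M_{i}, M_{i+1}, …, M_{i+r-1}` (indices mod `n`) are linearly independent over `F_{q^n}`,
and every row of `M` lies in their `F_{q^n}`-span. -/
theorem dickson_matrix_successive_rows
    (Fq Fqn : Type*) [Field Fq] [Fintype Fq] [Field Fqn] [Fintype Fqn]
    [Algebra Fq Fqn] (n r : ℕ) (hn : Module.finrank Fq Fqn = n) (hr : 1 ≤ r)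
    (f : Fin n → Fqn) (φ : Fqn →ₗ[Fq] Fqn)
    (hφ : ∀ x : Fqn, φ x = ∑ i : Fin n, f i * x ^ (Fintype.card Fq) ^ (i : ℕ))
    (hrank : Module.finrank Fq (LinearMap.range φ) = r) :
    let M : Matrix (Fin n) (Fin n) Fqn :=
      Matrix.of fun i j : Fin n => f (i - j) ^ (Fintype.card Fq) ^ (j : ℕ)
    ∀ i : Fin n,
      LinearIndependent Fqn
        (fun s : Fin r => M ⟨((i : ℕ) + (s : ℕ)) % n, Nat.mod_lt _ i.pos⟩) ∧
      ∀ m : Fin n, M m ∈ Submodule.span Fqn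
        (Set.range fun s : Fin r => M ⟨((i : ℕ) + (s : ℕ)) % n, Nat.mod_lt _ i.pos⟩) :=
  dickson_matrix_successive_rows_general Fq Fqn n r hn f φ hφ hrank
end

section
/- Let f(x) = f_0 x + f_1 x^q + ... + f_{n-1} x^{q^{n-1}} be a linearized polynomial over F_{q^n} of rank r ≥ 1 with Dickson matrix M. Then for all integers l_1, l_2 with 0 ≤ l_1, l_2 ≤ n−1, the r×r matrix with entries M_{(l_1+s) mod n, (l_2+t) mod n} for 0 ≤ s, t ≤ r−1 (i.e., the submatrix of M formed by r cyclically consecutive rows starting at l_1 and r cyclically consecutive columns starting at l_2) is invertible. -/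
open Module Polynomial

set_option linter.unusedSectionVars false
set_option maxHeartbeats 1000000

section DicksonAux
variable {Fq Fqn : Type*} [Field Fq] [Fintype Fq] [Field Fqn] [Fintype Fqn] [Algebra Fq Fqn]

/-- Raising to the `q^j`-th power is additive over sums (Frobenius). -/
lemma dickson_pow_q_sum (j : ℕ) {α : Type*} (s : Finset α) (g : α → Fqn) :
    (∑ i ∈ s, g i) ^ (Fintype.card Fq) ^ j = ∑ i ∈ s, (g i) ^ (Fintype.card Fq) ^ j := by
  set q := Fintype.card Fq with hq
  obtain ⟨e, hp, hqe⟩ := FiniteField.card Fq (ringChar Fq)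
  haveI : Fact (Nat.Prime (ringChar Fq)) := ⟨hp⟩
  haveI : CharP Fqn (ringChar Fq) := charP_of_injective_algebraMap (algebraMap Fq Fqn).injective _
  set p := ringChar Fq
  have hfrob : ∀ (x : Fqn), iterateFrobenius Fqn p ((e : ℕ) * j) x = x ^ q ^ j := by
    intro x; rw [iterateFrobenius_def, hq, hqe, ← pow_mul]
  rw [← hfrob, map_sum]
  exact Finset.sum_congr rfl fun i _ => hfrob (g i)

/-- Existence of the `Fq`-linear map `x ↦ ∑ c t * x^(q^(m+t))`. -/
lemma dickson_exists_psi (k m : ℕ) (c : Fin k → Fqn) :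
    ∃ ψ : Fqn →ₗ[Fq] Fqn, ∀ x, ψ x = ∑ t : Fin k, c t * x ^ (Fintype.card Fq) ^ (m + (t : ℕ)) := by
  set q := Fintype.card Fq with hq
  obtain ⟨e, hp, hqe⟩ := FiniteField.card Fq (ringChar Fq)
  haveI : Fact (Nat.Prime (ringChar Fq)) := ⟨hp⟩
  haveI : CharP Fqn (ringChar Fq) := charP_of_injective_algebraMap (algebraMap Fq Fqn).injective _
  set p := ringChar Fq
  have hfrob : ∀ (j : ℕ) (x : Fqn), iterateFrobenius Fqn p ((e : ℕ) * j) x = x ^ q ^ j := by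
    intro j x
    rw [iterateFrobenius_def, hq, hqe, ← pow_mul]
  refine ⟨{ toFun := fun x => ∑ t : Fin k, c t * x ^ q ^ (m + (t : ℕ)),
            map_add' := ?_, map_smul' := ?_ }, fun x => rfl⟩
  · intro x y
    rw [← Finset.sum_add_distrib]
    refine Finset.sum_congr rfl fun t _ => ?_
    rw [← hfrob, ← hfrob, ← hfrob, map_add, mul_add]
  · intro a x
    simp only [RingHom.id_apply, Algebra.smul_def, Finset.mul_sum]
    refine Finset.sum_congr rfl fun t _ => ?_
    rw [mul_pow, ← map_pow, FiniteField.pow_card_pow, mul_left_comm]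

/-- Kernel dimension bound for `x ↦ ∑ c t * x^(q^(m+t))` with `c ≠ 0`. -/
lemma dickson_ker_bound (k m : ℕ) (c : Fin k → Fqn) (hc : c ≠ 0)
    (ψ : Fqn →ₗ[Fq] Fqn)
    (hψ : ∀ x, ψ x = ∑ t : Fin k, c t * x ^ (Fintype.card Fq) ^ (m + (t : ℕ))) :
    finrank Fq (LinearMap.ker ψ) ≤ k - 1 := by
  set q := Fintype.card Fq with hq
  obtain ⟨e, hp, hqe⟩ := FiniteField.card Fq (ringChar Fq)
  haveI : Fact (Nat.Prime (ringChar Fq)) := ⟨hp⟩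
  haveI : CharP Fqn (ringChar Fq) := charP_of_injective_algebraMap (algebraMap Fq Fqn).injective _
  set p := ringChar Fq
  have hfrob : ∀ (j : ℕ) (x : Fqn), iterateFrobenius Fqn p ((e : ℕ) * j) x = x ^ q ^ j := by
    intro j x; rw [iterateFrobenius_def, hq, hqe, ← pow_mul]
  set F : Fqn →+* Fqn := iterateFrobenius Fqn p ((e : ℕ) * m) with hF
  have hFinj : Function.Injective F := F.injective
  have hFsurj : Function.Surjective F := Finite.injective_iff_surjective.mp hFinj
  choose c' hc' using fun t => hFsurj (c t)
  have hc'0 : c' ≠ 0 := by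
    intro h0
    apply hc; funext t
    have := hc' t
    rw [h0] at this
    simpa [map_zero] using this.symm
  have hψF : ∀ x, ψ x = F (∑ t : Fin k, c' t * x ^ q ^ (t : ℕ)) := by
    intro x
    rw [hψ, map_sum]
    refine Finset.sum_congr rfl fun t _ => ?_
    rw [map_mul, hc', hfrob m, ← pow_mul, ← pow_add, Nat.add_comm (t : ℕ) m]
  set P : Fqn[X] := ∑ t : Fin k, C (c' t) * X ^ (q ^ (t : ℕ)) with hP
  have hq2 : 1 < q := Fintype.one_lt_card
  obtain ⟨t₀, ht₀⟩ : ∃ t, c' t ≠ 0 := by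
    by_contra h; push_neg at h; exact hc'0 (funext fun t => h t)
  have hcoeff : P.coeff (q ^ (t₀ : ℕ)) = c' t₀ := by
    rw [hP, Polynomial.finset_sum_coeff]
    rw [Finset.sum_eq_single t₀]
    · simp
    · intro t _ hne
      have hne' : ¬ (q ^ (t : ℕ) = q ^ (t₀ : ℕ)) := by
        intro h
        exact hne (Fin.ext (Nat.pow_right_injective hq2 h))
      rw [coeff_C_mul, coeff_X_pow, if_neg (fun h : q ^ (t₀ : ℕ) = q ^ (t : ℕ) => hne' h.symm),
        mul_zero]
    · intro h; exact absurd (Finset.mem_univ t₀) h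
  have hP0 : P ≠ 0 := fun h => ht₀ (by rw [← hcoeff, h, coeff_zero])
  have hdeg : P.natDegree ≤ q ^ (k - 1) := by
    refine (Polynomial.natDegree_sum_le _ _).trans ?_
    rw [Finset.fold_max_le]
    refine ⟨Nat.zero_le _, fun t _ => ?_⟩
    refine (natDegree_C_mul_le _ _).trans ?_
    rw [natDegree_X_pow]
    exact Nat.pow_le_pow_right (by omega) (by omega)
  have hker : ∀ x : Fqn, x ∈ LinearMap.ker ψ → P.IsRoot x := by
    intro x hx
    have hx0 : ψ x = 0 := hx
    rw [hψF] at hx0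
    have : (∑ t : Fin k, c' t * x ^ q ^ (t : ℕ)) = 0 := hFinj (by rw [hx0, map_zero])
    simpa [hP, IsRoot, eval_finset_sum] using this
  classical
  have hcard : Fintype.card (LinearMap.ker ψ) ≤ q ^ (k - 1) := by
    have h1 : Fintype.card (LinearMap.ker ψ) ≤ P.roots.toFinset.card := by
      rw [← Fintype.card_coe P.roots.toFinset]
      refine Fintype.card_le_of_injective
        (fun x => ⟨x.1, by rw [Multiset.mem_toFinset, mem_roots hP0]; exact hker x.1 x.2⟩) ?_
      intro a b hab
      simp only [Subtype.mk.injEq] at hab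
      exact Subtype.ext hab
    calc Fintype.card (LinearMap.ker ψ) ≤ P.roots.toFinset.card := h1
      _ ≤ Multiset.card P.roots := Multiset.toFinset_card_le _
      _ ≤ P.natDegree := P.card_roots'
      _ ≤ q ^ (k - 1) := hdeg
  have hcard2 : Fintype.card (LinearMap.ker ψ) = q ^ finrank Fq (LinearMap.ker ψ) :=
    card_eq_pow_finrank (K := Fq)
  rw [hcard2] at hcard
  exact (Nat.pow_le_pow_iff_right hq2).mp hcard

end DicksonAux

/-- For a linearized polynomial `f` of rank `r ≥ 1` with Dickson matrix `M`
(`M_{i,j} = f_{(i-j) mod n}^{q^j}`), every `r × r` submatrix of `M` formed by `r`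
cyclically consecutive rows (starting at `l₁`) and `r` cyclically consecutive columns
(starting at `l₂`) is invertible. -/
theorem dickson_matrix_cyclic_submatrix_invertible
    (Fq Fqn : Type*) [Field Fq] [Fintype Fq] [Field Fqn] [Fintype Fqn]
    [Algebra Fq Fqn] (n r : ℕ) (hn : Module.finrank Fq Fqn = n) (hr : 1 ≤ r)
    (f : Fin n → Fqn) (φ : Fqn →ₗ[Fq] Fqn)
    (hφ : ∀ x : Fqn, φ x = ∑ i : Fin n, f i * x ^ (Fintype.card Fq) ^ (i : ℕ))
    (hrank : Module.finrank Fq (LinearMap.range φ) = r) :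
    let M : Matrix (Fin n) (Fin n) Fqn :=
      Matrix.of fun i j : Fin n => f (i - j) ^ (Fintype.card Fq) ^ (j : ℕ)
    ∀ l₁ l₂ : Fin n,
      IsUnit (Matrix.of fun s t : Fin r =>
        M ⟨((l₁ : ℕ) + (s : ℕ)) % n, Nat.mod_lt _ l₁.pos⟩
          ⟨((l₂ : ℕ) + (t : ℕ)) % n, Nat.mod_lt _ l₂.pos⟩) := by
  intro M l₁ l₂
  by_contra hA
  classical
  set q := Fintype.card Fq with hq
  have hnpos : 0 < n := l₁.pos
  haveI : NeZero n := ⟨hnpos.ne'⟩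
  haveI : FiniteDimensional Fq Fqn := Module.finite_of_finrank_pos (hn ▸ hnpos)
  have hrn : r ≤ n := by
    rw [← hrank, ← hn]
    exact Submodule.finrank_le _
  have hM : ∀ i j : Fin n, M i j = f (i - j) ^ q ^ (j : ℕ) := fun i j => rfl
  -- det = 0, extract linear dependence of columns
  have hdet : (Matrix.of fun s t : Fin r =>
      M ⟨((l₁ : ℕ) + (s : ℕ)) % n, Nat.mod_lt _ l₁.pos⟩
        ⟨((l₂ : ℕ) + (t : ℕ)) % n, Nat.mod_lt _ l₂.pos⟩).det = 0 := by
    by_contra hd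
    exact hA ((Matrix.isUnit_iff_isUnit_det _).mpr (isUnit_iff_ne_zero.mpr hd))
  obtain ⟨c, hc0, hcv⟩ := Matrix.exists_mulVec_eq_zero_iff.mpr hdet
  set v : Fin r → Fin n := fun t => ⟨((l₂ : ℕ) + (t : ℕ)) % n, Nat.mod_lt _ l₂.pos⟩ with hv
  set w : Fin r → Fin n := fun s => ⟨((l₁ : ℕ) + (s : ℕ)) % n, Nat.mod_lt _ l₁.pos⟩ with hw
  have hcomp : ∀ s : Fin r, ∑ t : Fin r, M (w s) (v t) * c t = 0 := by
    intro s
    have := congrFun hcv s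
    simpa [Matrix.mulVec, dotProduct, hv, hw] using this
  -- mod-n reduction of q-power exponents
  have hcardn : Fintype.card Fqn = q ^ n := by
    rw [card_eq_pow_finrank (K := Fq) (V := Fqn), hn]
  have hxn : ∀ x : Fqn, x ^ q ^ n = x := fun x => by
    rw [← hcardn]; exact FiniteField.pow_card x
  have hmul : ∀ (x : Fqn) (s : ℕ), x ^ q ^ (n * s) = x := by
    intro x s
    induction s with
    | zero => simp
    | succ s ih => rw [Nat.mul_succ, pow_add, pow_mul, hxn, ih]
  have hmod : ∀ (x : Fqn) (a : ℕ), x ^ q ^ (a % n) = x ^ q ^ a := by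
    intro x a
    conv_rhs => rw [← Nat.mod_add_div a n]
    rw [pow_add, pow_mul, hmul]
  -- the linear map g
  obtain ⟨g, hg⟩ := dickson_exists_psi (Fq := Fq) r (l₂ : ℕ) c
  set d : Fin n → Fqn := fun kk => ∑ t : Fin r, c t * M kk (v t) with hd
  -- the key coordinate computation for g ∘ φ
  have hhx : ∀ x, g (φ x) = ∑ kk : Fin n, d kk * x ^ q ^ (kk : ℕ) := by
    intro x
    rw [hg (φ x), hφ x]
    have step1 : ∀ t : Fin r,
        (∑ i : Fin n, f i * x ^ q ^ (i : ℕ)) ^ q ^ ((l₂ : ℕ) + (t : ℕ))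
          = ∑ kk : Fin n, M kk (v t) * x ^ q ^ (kk : ℕ) := by
      intro t
      rw [dickson_pow_q_sum (Fq := Fq)]
      have hterm : ∀ i : Fin n, (f i * x ^ q ^ (i : ℕ)) ^ q ^ ((l₂ : ℕ) + (t : ℕ))
          = (fun kk : Fin n => M kk (v t) * x ^ q ^ (kk : ℕ)) (i + v t) := by
        intro i
        have hval : ((i + v t : Fin n) : ℕ) = ((i : ℕ) + ((l₂ : ℕ) + (t : ℕ))) % n := by
          simp only [Fin.val_add, hv]
          conv_lhs => rw [Nat.add_mod, Nat.mod_mod_of_dvd _ (dvd_refl n), ← Nat.add_mod]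
        show (f i * x ^ q ^ (i : ℕ)) ^ q ^ ((l₂ : ℕ) + (t : ℕ))
            = M (i + v t) (v t) * x ^ q ^ ((i + v t : Fin n) : ℕ)
        rw [hM, add_sub_cancel_right]
        rw [mul_pow, ← pow_mul, ← pow_add]
        congr 1
        · -- f i ^ q^(l₂+t) = f i ^ q^((v t : ℕ))
          have : ((v t : Fin n) : ℕ) = ((l₂ : ℕ) + (t : ℕ)) % n := by rw [hv]
          rw [this, hmod]
        · rw [hval, hmod]
      rw [Finset.sum_congr rfl (fun i _ => hterm i)]
      simpa using Equiv.sum_comp (Equiv.addRight (v t))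
        (fun kk : Fin n => M kk (v t) * x ^ q ^ (kk : ℕ))
    calc ∑ t : Fin r, c t * (∑ i : Fin n, f i * x ^ q ^ (i : ℕ)) ^ q ^ ((l₂ : ℕ) + (t : ℕ))
        = ∑ t : Fin r, c t * ∑ kk : Fin n, M kk (v t) * x ^ q ^ (kk : ℕ) := by
          exact Finset.sum_congr rfl fun t _ => by rw [step1 t]
      _ = ∑ t : Fin r, ∑ kk : Fin n, c t * (M kk (v t) * x ^ q ^ (kk : ℕ)) := by
          exact Finset.sum_congr rfl fun t _ => Finset.mul_sum _ _ _
      _ = ∑ kk : Fin n, ∑ t : Fin r, c t * (M kk (v t) * x ^ q ^ (kk : ℕ)) := Finset.sum_comm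
      _ = ∑ kk : Fin n, d kk * x ^ q ^ (kk : ℕ) := by
          refine Finset.sum_congr rfl fun kk _ => ?_
          rw [hd, Finset.sum_mul]
          exact Finset.sum_congr rfl fun t _ => by rw [mul_assoc]
  -- d vanishes on the row window
  have hdw : ∀ s : Fin r, d (w s) = 0 := by
    intro s
    rw [hd]
    rw [← hcomp s]
    exact Finset.sum_congr rfl fun t _ => mul_comm _ _
  -- rewrite g ∘ φ over the complementary window
  set m' := (l₁ : ℕ) + r with hm'
  set d'' : Fin (n - r) → Fqn :=
    fun u => d ⟨((l₁ : ℕ) + (r + (u : ℕ))) % n, Nat.mod_lt _ hnpos⟩ with hd''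
  have hwin : ∀ x, g (φ x) = ∑ u : Fin (n - r), d'' u * x ^ q ^ (m' + (u : ℕ)) := by
    intro x
    rw [hhx x]
    have e1 : ∑ kk : Fin n, d kk * x ^ q ^ (kk : ℕ)
        = ∑ j : Fin n, d (l₁ + j) * x ^ q ^ ((l₁ + j : Fin n) : ℕ) :=
      (Equiv.sum_comp (Equiv.addLeft l₁) (fun kk : Fin n => d kk * x ^ q ^ (kk : ℕ))).symm
    rw [e1]
    have hrn' : r + (n - r) = n := Nat.add_sub_cancel' hrn
    set σ : Fin r ⊕ Fin (n - r) ≃ Fin n := finSumFinEquiv.trans (finCongr hrn') with hσ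
    have e2 : ∑ j : Fin n, d (l₁ + j) * x ^ q ^ ((l₁ + j : Fin n) : ℕ)
        = ∑ a : Fin r ⊕ Fin (n - r),
            d (l₁ + σ a) * x ^ q ^ ((l₁ + σ a : Fin n) : ℕ) :=
      (Equiv.sum_comp σ (fun j : Fin n => d (l₁ + j) * x ^ q ^ ((l₁ + j : Fin n) : ℕ))).symm
    rw [e2, Fintype.sum_sum_type]
    have hinl : ∀ s : Fin r, (l₁ + σ (Sum.inl s) : Fin n) = w s := by
      intro s
      apply Fin.ext
      have h2 : ((σ (Sum.inl s) : Fin n) : ℕ) = (s : ℕ) := by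
        simp [hσ]
      simp only [Fin.val_add, h2, hw]
    have hinr : ∀ u : Fin (n - r),
        ((l₁ + σ (Sum.inr u) : Fin n) : ℕ) = ((l₁ : ℕ) + (r + (u : ℕ))) % n := by
      intro u
      have h2 : ((σ (Sum.inr u) : Fin n) : ℕ) = r + (u : ℕ) := by
        simp [hσ]
      simp only [Fin.val_add, h2]
    have hz : ∑ s : Fin r, d (l₁ + σ (Sum.inl s)) * x ^ q ^ ((l₁ + σ (Sum.inl s) : Fin n) : ℕ)
        = 0 := by
      refine Finset.sum_eq_zero fun s _ => ?_
      rw [hinl s, hdw s, zero_mul]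
    rw [hz, zero_add]
    refine Finset.sum_congr rfl fun u _ => ?_
    have hdeq : d (l₁ + σ (Sum.inr u)) = d'' u := by
      rw [hd'']
      congr 1
    rw [hdeq, hinr u, hmod]
    have h3 : (l₁ : ℕ) + (r + (u : ℕ)) = m' + (u : ℕ) := by omega
    rw [h3]
  -- finish by a dimension count
  by_cases hD : d'' = 0
  · have hgφ : ∀ x, g (φ x) = 0 := by
      intro x
      rw [hwin x, hD]
      simp
    have hle : LinearMap.range φ ≤ LinearMap.ker g := by
      rintro y ⟨x, rfl⟩
      exact hgφ x
    have h1 := Submodule.finrank_mono hle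
    have hkg : finrank Fq (LinearMap.ker g) ≤ r - 1 :=
      dickson_ker_bound r (l₂ : ℕ) c hc0 g hg
    rw [hrank] at h1
    omega
  · have hnr1 : 1 ≤ n - r := by
      by_contra hh
      apply hD
      funext u
      exact absurd u.isLt (by omega)
    have hker : finrank Fq (LinearMap.ker (g.comp φ)) ≤ (n - r) - 1 :=
      dickson_ker_bound (n - r) m' d'' hD (g.comp φ)
        (fun x => by rw [LinearMap.comp_apply, hwin x])
    have hrn2 : finrank Fq (LinearMap.range (g.comp φ)) +
        finrank Fq (LinearMap.ker (g.comp φ)) = n := by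
      rw [LinearMap.finrank_range_add_finrank_ker, hn]
    have hle2 : finrank Fq (LinearMap.range (g.comp φ)) ≤ r := by
      rw [LinearMap.range_comp]
      exact le_trans (Submodule.finrank_map_le g (LinearMap.range φ)) (le_of_eq hrank)
    omega
end

section
/- Let C be an F_q-linear subspace of the n×n matrices over F_q containing a nonzero element, and suppose the minimum rank distance of C equals d, i.e., d is the minimum of rank(c_1 − c_2) over distinct c_1, c_2 ∈ C. Then the cardinality of C satisfies |C| ≤ q^{n(n−d+1)}. -/
open Matrix Submodule

lemma aux_rank_le_of_zero_rows {Fq : Type*} [Field Fq] {n m : ℕ} (hm : m ≤ n)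
    (A : Matrix (Fin n) (Fin n) Fq) (h : ∀ i : Fin n, (i : ℕ) < m → A i = 0) :
    A.rank ≤ n - m := by
  classical
  rw [Matrix.rank_eq_finrank_span_row]
  set g : Fin (n - m) → (Fin n → Fq) := fun k => A ⟨m + k, by omega⟩ with hg
  have hsub : Submodule.span Fq (Set.range A) ≤ Submodule.span Fq (Set.range g) := by
    rw [Submodule.span_le]
    rintro _ ⟨i, rfl⟩
    by_cases hi : (i : ℕ) < m
    · rw [h i hi]; exact Submodule.zero_mem _
    · apply Submodule.subset_span
      refine ⟨⟨(i : ℕ) - m, by omega⟩, ?_⟩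
      have hi' : (⟨m + ((i : ℕ) - m), by omega⟩ : Fin n) = i := by
        ext; simp only []; omega
      simp only [hg, hi']
  have h1 : Module.finrank Fq (Submodule.span Fq (Set.range A)) ≤
      Module.finrank Fq (Submodule.span Fq (Set.range g)) :=
    Submodule.finrank_mono hsub
  refine h1.trans ?_
  refine (finrank_span_le_card (R := Fq) (Set.range g)).trans ?_
  rw [Set.toFinset_range]
  exact (Finset.card_image_le).trans (by simp)

/-- Singleton-like bound for rank metric codes (Delsarte): if `C` is an `F_q`-linear
subspace of `n × n` matrices containing a nonzero element and its minimum rank distance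
equals `d` (i.e. `d` is the minimum of `rank (c₁ - c₂)` over distinct codewords, attained
by some pair), then `|C| ≤ q^{n(n-d+1)}`. -/
theorem rank_metric_singleton_bound
    (Fq : Type*) [Field Fq] [Fintype Fq] (n d : ℕ)
    (C : Submodule Fq (Matrix (Fin n) (Fin n) Fq))
    (hC : ∃ c ∈ C, c ≠ 0)
    (hd_le : ∀ c₁ ∈ C, ∀ c₂ ∈ C, c₁ ≠ c₂ → d ≤ (c₁ - c₂).rank)
    (hd_eq : ∃ c₁ ∈ C, ∃ c₂ ∈ C, c₁ ≠ c₂ ∧ (c₁ - c₂).rank = d) :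
    Nat.card C ≤ (Fintype.card Fq) ^ (n * (n - d + 1)) := by
  classical
  obtain ⟨c₁, hc₁, c₂, hc₂, hne, hrank⟩ := hd_eq
  -- d ≥ 1
  have hd1 : 1 ≤ d := by
    rcases Nat.eq_zero_or_pos d with h0 | h
    · exfalso
      rw [h0, Matrix.rank_eq_finrank_span_row] at hrank
      have hbot : Submodule.span Fq (Set.range (c₁ - c₂)) = ⊥ :=
        Submodule.finrank_eq_zero.mp hrank
      have hA : c₁ - c₂ = 0 := by
        funext i j
        have hi : (c₁ - c₂) i ∈ (⊥ : Submodule Fq (Fin n → Fq)) :=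
          hbot ▸ Submodule.subset_span ⟨i, rfl⟩
        have := (Submodule.mem_bot Fq).mp hi
        simpa using congrFun this j
      exact hne (sub_eq_zero.mp hA)
    · exact h
  -- d ≤ n
  have hdn : d ≤ n := by
    have := Matrix.rank_le_card_height (c₁ - c₂)
    simpa [hrank] using this
  set m : ℕ := n - d + 1 with hmdef
  have hm : m ≤ n := by omega
  -- the projection map
  set φ : C → (Fin m → Fin n → Fq) :=
    fun c => fun i j => (c : Matrix (Fin n) (Fin n) Fq) (Fin.castLE hm i) j with hφ
  have hinj : Function.Injective φ := by
    intro x y hxy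
    by_contra hxyne
    have hxyne' : (x : Matrix (Fin n) (Fin n) Fq) ≠ (y : Matrix (Fin n) (Fin n) Fq) := by
      exact fun h => hxyne (Subtype.ext h)
    have hdle := hd_le _ x.2 _ y.2 hxyne'
    have hzero : ∀ i : Fin n, (i : ℕ) < m →
        ((x : Matrix (Fin n) (Fin n) Fq) - (y : Matrix (Fin n) (Fin n) Fq)) i = 0 := by
      intro i hi
      funext j
      have := congrFun (congrFun hxy ⟨(i : ℕ), hi⟩) j
      simp only [hφ] at this
      have hcast : Fin.castLE hm (⟨(i : ℕ), hi⟩ : Fin m) = i := by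
        ext; rfl
      rw [hcast] at this
      simp [Matrix.sub_apply, this]
    have hle := aux_rank_le_of_zero_rows hm _ hzero
    omega
  have hcard : Nat.card C ≤ Nat.card (Fin m → Fin n → Fq) :=
    Nat.card_le_card_of_injective φ hinj
  have : Nat.card (Fin m → Fin n → Fq) = (Fintype.card Fq) ^ (n * m) := by
    simp [Nat.card_eq_fintype_card, Fintype.card_fun, ← pow_mul, Nat.mul_comm]
  rw [this] at hcard
  exact hcard
end

section
/- Let 1 ≤ k ≤ n and let f(x) = a_0 x + a_1 x^q + ... + a_{k−1} x^{q^{k−1}} be a nonzero linearized polynomial over F_{q^n} of q-degree at most k−1. Then the F_q-linear map F_{q^n} → F_{q^n} induced by f has rank at least n − k + 1 (equivalently, its kernel has F_q-dimension at most k − 1). Consequently the Gabidulin code {Σ_{i=0}^{k−1} a_i x^{q^i} : a_i ∈ F_{q^n}} is a maximum rank distance code with minimum distance n − k + 1. -/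
/-- Every nonzero linearized polynomial `f(x) = Σ_{i<k} a_i x^{q^i}` of `q`-degree at most
`k - 1` over `F_{q^n}` (with `1 ≤ k ≤ n`) induces an `F_q`-linear map of rank at least
`n - k + 1`; equivalently its kernel has `F_q`-dimension at most `k - 1`. (This is the key
fact showing that the Gabidulin code of dimension `k` is MRD with minimum distance
`n - k + 1`.) -/
theorem gabidulin_codeword_rank_bound
    (Fq Fqn : Type*) [Field Fq] [Fintype Fq] [Field Fqn] [Fintype Fqn]
    [Algebra Fq Fqn] (n k : ℕ) (hn : Module.finrank Fq Fqn = n)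
    (hk1 : 1 ≤ k) (hkn : k ≤ n)
    (a : Fin k → Fqn) (ha : a ≠ 0) (φ : Fqn →ₗ[Fq] Fqn)
    (hφ : ∀ x : Fqn, φ x = ∑ i : Fin k, a i * x ^ (Fintype.card Fq) ^ (i : ℕ)) :
    n - k + 1 ≤ Module.finrank Fq (LinearMap.range φ) ∧
      Module.finrank Fq (LinearMap.ker φ) ≤ k - 1 := by
  classical
  set q := Fintype.card Fq with hq
  have hq2 : 2 ≤ q := Fintype.one_lt_card
  -- the polynomial
  set P : Polynomial Fqn := ∑ i : Fin k, Polynomial.C (a i) * Polynomial.X ^ q ^ (i : ℕ)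
    with hP
  have heval : ∀ x : Fqn, P.eval x = φ x := by
    intro x
    rw [hφ, hP, Polynomial.eval_finset_sum]
    simp
  -- coefficients of P
  have hcoeff : ∀ i : Fin k, P.coeff (q ^ (i : ℕ)) = a i := by
    intro i
    rw [hP, Polynomial.finset_sum_coeff]
    rw [Finset.sum_eq_single i]
    · simp
    · intro j _ hji
      have : q ^ (j : ℕ) ≠ q ^ (i : ℕ) := by
        intro h
        exact hji (Fin.ext (Nat.pow_right_injective hq2 h))
      simp [Polynomial.coeff_C_mul, Polynomial.coeff_X_pow, this, this.symm]
    · simp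
  have hPne : P ≠ 0 := by
    obtain ⟨i, hi⟩ := Function.ne_iff.mp ha
    intro h
    apply hi
    have := hcoeff i
    rw [h] at this
    simpa using this.symm
  have hdeg : P.natDegree ≤ q ^ (k - 1) := by
    apply Polynomial.natDegree_sum_le_of_forall_le
    intro i _
    calc (Polynomial.C (a i) * Polynomial.X ^ q ^ (i : ℕ)).natDegree
        ≤ q ^ (i : ℕ) := by
          exact le_trans (Polynomial.natDegree_C_mul_le _ _) (le_of_eq (Polynomial.natDegree_X_pow _))
      _ ≤ q ^ (k - 1) := Nat.pow_le_pow_right (by omega) (by omega)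
  -- kernel is contained in roots of P
  have hker : Fintype.card (LinearMap.ker φ) ≤ q ^ (k - 1) := by
    have hsub : ((LinearMap.ker φ : Set Fqn)).toFinset ⊆ P.roots.toFinset := by
      intro x hx
      rw [Set.mem_toFinset] at hx
      rw [Multiset.mem_toFinset, Polynomial.mem_roots hPne]
      show P.eval x = 0
      rw [heval]
      exact hx
    calc Fintype.card (LinearMap.ker φ)
        = ((LinearMap.ker φ : Set Fqn)).toFinset.card := by
          simp [Set.toFinset_card]
      _ ≤ P.roots.toFinset.card := Finset.card_le_card hsub
      _ ≤ Multiset.card P.roots := Multiset.toFinset_card_le _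
      _ ≤ P.natDegree := Polynomial.card_roots' P
      _ ≤ q ^ (k - 1) := hdeg
  have hcard : Fintype.card (LinearMap.ker φ) =
      q ^ Module.finrank Fq (LinearMap.ker φ) := Module.card_eq_pow_finrank
  rw [hcard] at hker
  have hkle : Module.finrank Fq (LinearMap.ker φ) ≤ k - 1 :=
    (Nat.pow_le_pow_iff_right hq2).mp hker
  have hrn : Module.finrank Fq (LinearMap.range φ) +
      Module.finrank Fq (LinearMap.ker φ) = n := by
    rw [← hn]; exact LinearMap.finrank_range_add_finrank_ker φ
  exact ⟨by omega, hkle⟩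
end

section
/- Let 1 ≤ k < n, let r be a nonnegative integer, and let η ∈ F_{q^n} satisfy Π_{i=0}^{n−1} η^{q^i} ≠ (−1)^{nk} (i.e., the norm of η over F_q is not (−1)^{nk}). Then every nonzero polynomial of the form f(x) = a_0 x + a_1 x^q + ... + a_{k−1} x^{q^{k−1}} + η a_0^{q^r} x^{q^k} with a_0, ..., a_{k−1} ∈ F_{q^n} induces an F_q-linear map on F_{q^n} of rank at least n − k + 1; hence the twisted Gabidulin code C'_{η,r} = {a_0 x + ... + a_{k−1} x^{q^{k−1}} + η a_0^{q^r} x^{q^k} : a_i ∈ F_{q^n}} is a maximum rank distance code. -/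
open Finset Polynomial


private lemma tg_neg_one_pow_congr {R : Type*} [Monoid R] [HasDistribNeg R] {a b : ℕ}
    (h : a % 2 = b % 2) : (-1 : R) ^ a = (-1 : R) ^ b := by
  rw [← Nat.div_add_mod a 2, ← Nat.div_add_mod b 2, pow_add, pow_add, pow_mul, pow_mul,
    neg_one_sq, one_pow, one_pow, h]

private lemma tg_fix_pow {R : Type*} [Monoid R] {x : R} {q : ℕ} (h : x ^ q = x) (r : ℕ) :
    x ^ q ^ r = x := by
  induction r with
  | zero => simpa using pow_one x
  | succ r ih => rw [pow_succ, pow_mul, ih, h]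

private lemma tg_sum_aux {q n : ℕ} (hq1 : 1 ≤ q) :
    (∑ i ∈ Finset.range n, q ^ i) * q + 1 = (∑ i ∈ Finset.range n, q ^ i) + q ^ n := by
  have h1 : (∑ i ∈ Finset.range n, q ^ i) * q = ∑ i ∈ Finset.range n, q ^ (i + 1) := by
    rw [Finset.sum_mul]; simp [pow_succ]
  have h2 := Finset.sum_range_succ (fun i => q ^ i) n
  have h3 := Finset.sum_range_succ' (fun i => q ^ i) n
  simp only [pow_zero] at h3
  omega

private lemma tg_frob {Fqn : Type*} [Field Fqn] [Fintype Fqn] {q n : ℕ}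
    (hq1 : 1 ≤ q) (hcard : Fintype.card Fqn = q ^ n) {z : Fqn} (hz : z ≠ 0) :
    (z ^ (∑ i ∈ Finset.range n, q ^ i)) ^ q = z ^ (∑ i ∈ Finset.range n, q ^ i) := by
  have h2 : (z ^ (∑ i ∈ Finset.range n, q ^ i)) ^ q * z
      = z ^ (∑ i ∈ Finset.range n, q ^ i) * z := by
    rw [← pow_mul, ← pow_succ, tg_sum_aux hq1, pow_add]
    congr 1
    rw [← hcard]
    exact FiniteField.pow_card z
  exact mul_right_cancel₀ hz h2

private lemma tg_norm_one {Fqn : Type*} [Field Fqn] [Fintype Fqn] {q n : ℕ}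
    (hq1 : 1 ≤ q) (hcard : Fintype.card Fqn = q ^ n) {z : Fqn} (hz : z ≠ 0) :
    (z ^ (∑ i ∈ Finset.range n, q ^ i)) ^ (q - 1) = 1 := by
  have hzE : z ^ (∑ i ∈ Finset.range n, q ^ i) ≠ 0 := pow_ne_zero _ hz
  refine mul_right_cancel₀ hzE ?_
  rw [one_mul, ← pow_succ, Nat.sub_add_cancel hq1]
  exact tg_frob hq1 hcard hz


-- elements with w^(q-1)=1 come from Fq
private lemma tg_root_mem {Fq Fqn : Type*} [Field Fq] [Fintype Fq] [Field Fqn] [Fintype Fqn]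
    [Algebra Fq Fqn] {w : Fqn} (hw : w ^ (Fintype.card Fq - 1) = 1) :
    ∃ c : Fqˣ, algebraMap Fq Fqn c = w := by
  classical
  set q := Fintype.card Fq with hq
  have hq2 : 2 ≤ q := Fintype.one_lt_card
  set P : Polynomial Fqn := X ^ (q - 1) - 1 with hP
  have hPdeg : P.natDegree = q - 1 := by
    rw [hP]
    compute_degree!
    rw [if_neg (by omega : ¬ q - 1 = 0)]
    norm_num
  have hPne : P ≠ 0 := by
    intro h
    rw [h, natDegree_zero] at hPdeg
    omega
  set I : Finset Fqn := Finset.univ.image (fun c : Fqˣ => algebraMap Fq Fqn (c : Fq)) with hI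
  have hinj : Function.Injective (fun c : Fqˣ => algebraMap Fq Fqn (c : Fq)) := by
    intro c₁ c₂ h
    exact Units.ext ((algebraMap Fq Fqn).injective h)
  have hIcard : I.card = q - 1 := by
    rw [hI, Finset.card_image_of_injective _ hinj, Finset.card_univ, Fintype.card_units]
  have hsub : I ⊆ P.roots.toFinset := by
    intro x hx
    rw [hI, Finset.mem_image] at hx
    obtain ⟨c, -, rfl⟩ := hx
    rw [Multiset.mem_toFinset, mem_roots hPne]
    have : ((c : Fq)) ^ (q - 1) = 1 := FiniteField.pow_card_sub_one_eq_one _ c.ne_zero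
    simp only [IsRoot, hP, eval_sub, eval_pow, eval_X, eval_one, sub_eq_zero]
    rw [← map_pow, this, map_one]
  have hroots_card : P.roots.toFinset.card ≤ q - 1 := by
    calc P.roots.toFinset.card ≤ Multiset.card P.roots := Multiset.toFinset_card_le _
      _ ≤ P.natDegree := P.card_roots'
      _ = q - 1 := hPdeg
  have hIeq : I = P.roots.toFinset :=
    Finset.eq_of_subset_of_card_le hsub (by rw [hIcard]; exact hroots_card)
  have hwroot : w ∈ P.roots.toFinset := by
    rw [Multiset.mem_toFinset, mem_roots hPne]
    simp [IsRoot, hP, hw]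
  rw [← hIeq, hI, Finset.mem_image] at hwroot
  obtain ⟨c, -, hc⟩ := hwroot
  exact ⟨c, hc⟩

private lemma tg_prod_units {Fq : Type*} [Field Fq] [Fintype Fq] [DecidableEq Fq] :
    (∏ x : Fqˣ, (x : Fq)) = -1 := by
  simp_rw [← Units.coeHom_apply]
  rw [← map_prod (Units.coeHom Fq)]
  simp_rw [FiniteField.prod_univ_units_id_eq_neg_one, Units.coeHom_apply, Units.val_neg,
    Units.val_one]

private lemma tg_norm_sub_prod {Fq Fqn : Type*} [Field Fq] [Fintype Fq] [Field Fqn] [Fintype Fqn]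
    [Algebra Fq Fqn] {q n k : ℕ} (hqdef : q = Fintype.card Fq) (hn1 : 0 < n)
    (hcard : Fintype.card Fqn = q ^ n)
    (K : Submodule Fq Fqn) (hK : Module.finrank Fq ↥K = k)
    (S : Finset Fqn) (hmemS : ∀ u : Fqn, u ∈ S ↔ u ∈ K ∧ u ≠ 0)
    (hcardS : S.card = q ^ k - 1) :
    (∏ u ∈ S, u) ^ (∑ i ∈ Finset.range n, q ^ i) = (-1 : Fqn) ^ (n * k) := by
  classical
  have hq2 : 2 ≤ q := by rw [hqdef]; exact Fintype.one_lt_card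
  have hq1 : 1 ≤ q := le_trans one_le_two hq2
  set E := ∑ i ∈ Finset.range n, q ^ i with hE
  set g : Fqn → Fqn := fun u => u ^ (q - 1) with hg
  set B := S.image g with hB
  set m := B.card with hm
  have hmaps : ∀ u ∈ S, g u ∈ B := fun u hu => Finset.mem_image_of_mem g hu
  -- fiber description
  have hfiber : ∀ b ∈ B, (∏ v ∈ S.filter (fun v => g v = b), v = -b) ∧
      (S.filter (fun v => g v = b)).card = q - 1 := by
    intro b hb
    obtain ⟨u, huS, hub⟩ := Finset.mem_image.mp hb
    obtain ⟨huK, hu0⟩ := (hmemS u).mp huS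
    simp only [hg] at hub
    have hinj : Function.Injective (fun c : Fqˣ => algebraMap Fq Fqn (c : Fq) * u) := by
      intro c₁ c₂ h
      simp only at h
      have := mul_right_cancel₀ hu0 h
      exact Units.ext ((algebraMap Fq Fqn).injective this)
    have hfe : S.filter (fun v => g v = b) =
        Finset.univ.image (fun c : Fqˣ => algebraMap Fq Fqn (c : Fq) * u) := by
      ext v
      rw [Finset.mem_filter, Finset.mem_image]
      constructor
      · rintro ⟨hvS, hvb⟩
        obtain ⟨hvK, hv0⟩ := (hmemS v).mp hvS
        simp only [hg] at hvb
        have hw : (v * u⁻¹) ^ (Fintype.card Fq - 1) = 1 := by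
          rw [← hqdef, mul_pow, inv_pow, hvb, ← hub]
          exact mul_inv_cancel₀ (pow_ne_zero _ hu0)
        obtain ⟨c, hc⟩ := tg_root_mem hw
        refine ⟨c, Finset.mem_univ c, ?_⟩
        simp only [hc]
        field_simp
      · rintro ⟨c, -, rfl⟩
        have hc0 : algebraMap Fq Fqn (c : Fq) ≠ 0 := by
          simp only [ne_eq, _root_.map_eq_zero]
          exact c.ne_zero
        have hcpow : (algebraMap Fq Fqn (c : Fq)) ^ (q - 1) = 1 := by
          rw [← map_pow, hqdef, FiniteField.pow_card_sub_one_eq_one _ c.ne_zero, map_one]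
        constructor
        · rw [hmemS]
          refine ⟨?_, mul_ne_zero hc0 hu0⟩
          rw [← Algebra.smul_def]
          exact K.smul_mem _ huK
        · simp only [hg]
          rw [mul_pow, hcpow, one_mul, hub]
    constructor
    · rw [hfe, Finset.prod_image (fun c₁ _ c₂ _ h => hinj h)]
      rw [Finset.prod_mul_distrib, Finset.prod_const, Finset.card_univ, Fintype.card_units,
        ← hqdef, ← map_prod, tg_prod_units, map_neg, map_one, hub]
      ring
    · rw [hfe, Finset.card_image_of_injective _ hinj, Finset.card_univ, Fintype.card_units,
        ← hqdef]
  -- product over S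
  have hprodS : ∏ u ∈ S, u = (-1) ^ m * ∏ b ∈ B, b := by
    rw [← Finset.prod_fiberwise_of_maps_to hmaps (fun x => x)]
    rw [Finset.prod_congr rfl (fun b hb => (hfiber b hb).1), hm]
    rw [← Finset.prod_const, ← Finset.prod_mul_distrib]
    exact Finset.prod_congr rfl fun b _ => (neg_one_mul b).symm
  -- counting
  have hcount : q ^ k - 1 = m * (q - 1) := by
    rw [← hcardS, Finset.card_eq_sum_card_fiberwise hmaps,
      Finset.sum_congr rfl (fun b hb => (hfiber b hb).2), Finset.sum_const, smul_eq_mul, hm]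
  have hmsum : m = ∑ i ∈ Finset.range k, q ^ i := by
    have hqk1 : 1 ≤ q ^ k := Nat.one_le_pow _ _ (by omega)
    have hz : ((q : ℤ) - 1) ≠ 0 := by
      have : (2 : ℤ) ≤ (q : ℤ) := by exact_mod_cast hq2
      omega
    have h1 : (m : ℤ) * ((q : ℤ) - 1) = (∑ i ∈ Finset.range k, (q : ℤ) ^ i) * ((q : ℤ) - 1) := by
      rw [geom_sum_mul]
      have hc := congrArg (fun t : ℕ => (t : ℤ)) hcount
      push_cast [hqk1, hq1] at hc ⊢
      omega
    have h2 := mul_right_cancel₀ hz h1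
    have h3 : ((∑ i ∈ Finset.range k, q ^ i : ℕ) : ℤ) = ∑ i ∈ Finset.range k, (q : ℤ) ^ i := by
      push_cast; ring
    rw [← h3] at h2
    exact_mod_cast h2
  -- norms of elements of B are 1
  have hNB : ∀ b ∈ B, b ^ E = 1 := by
    intro b hb
    obtain ⟨u, huS, hub⟩ := Finset.mem_image.mp hb
    obtain ⟨-, hu0⟩ := (hmemS u).mp huS
    simp only [hg] at hub
    rw [← hub, ← pow_mul, mul_comm, pow_mul]
    exact tg_norm_one hq1 hcard hu0
  -- assemble
  have hassemble : (∏ u ∈ S, u) ^ E = (-1 : Fqn) ^ (m * E) := by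
    rw [hprodS, mul_pow, ← Finset.prod_pow]
    rw [Finset.prod_congr rfl hNB, Finset.prod_const_one, mul_one, ← pow_mul]
  rw [hassemble]
  -- parity
  have hE1 : (-1 : Fqn) ^ (q ^ n - 1) = 1 := by
    rw [← hcard]
    exact FiniteField.pow_card_sub_one_eq_one (-1) (neg_ne_zero.mpr one_ne_zero)
  rcases Nat.even_or_odd q with hqe | hqo
  · have heven : Even (q ^ n) := (Nat.even_pow).mpr ⟨hqe, hn1.ne'⟩
    have hodd : Odd (q ^ n - 1) := by
      obtain ⟨t, ht⟩ := heven
      have : 1 ≤ q ^ n := Nat.one_le_pow _ _ (by omega)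
      exact ⟨t - 1, by omega⟩
    rw [hodd.neg_one_pow] at hE1
    rw [hE1, one_pow, one_pow]
  · apply tg_neg_one_pow_congr
    have hsum_mod : ∀ j : ℕ, (∑ i ∈ Finset.range j, q ^ i) % 2 = j % 2 := by
      intro j
      rw [Finset.sum_nat_mod]
      have h4 : ∀ i ∈ Finset.range j, q ^ i % 2 = 1 % 2 := by
        intro i _
        rw [Nat.odd_iff.mp (hqo.pow)]
      rw [Finset.sum_congr rfl h4, ← Finset.sum_nat_mod, Finset.sum_const, smul_eq_mul,
        mul_one, Finset.card_range]
    have hm2 : m % 2 = k % 2 := by rw [hmsum]; exact hsum_mod k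
    have hE2 : E % 2 = n % 2 := by rw [hE]; exact hsum_mod n
    conv_lhs => rw [Nat.mul_mod, hm2, hE2, ← Nat.mul_mod, mul_comm k n]

/-- Twisted Gabidulin codes are MRD (Sheekey): let `1 ≤ k < n`, `r ≥ 0`, and
`η ∈ F_{q^n}` with `Π_{i<n} η^{q^i} ≠ (-1)^{nk}`. Then every nonzero polynomial
`f(x) = a_0 x + ⋯ + a_{k-1} x^{q^{k-1}} + η a_0^{q^r} x^{q^k}` induces an `F_q`-linear
map on `F_{q^n}` of rank at least `n - k + 1`; hence `C'_{η,r}` is MRD. -/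
theorem twisted_gabidulin_codeword_rank_bound
    (Fq Fqn : Type*) [Field Fq] [Fintype Fq] [Field Fqn] [Fintype Fqn]
    [Algebra Fq Fqn] (n k r : ℕ) (hn : Module.finrank Fq Fqn = n)
    (hk1 : 1 ≤ k) (hkn : k < n) (η : Fqn)
    (hη : ∏ i ∈ Finset.range n, η ^ (Fintype.card Fq) ^ i ≠ (-1 : Fqn) ^ (n * k))
    (a : Fin k → Fqn) (ha : a ≠ 0) (φ : Fqn →ₗ[Fq] Fqn)
    (hφ : ∀ x : Fqn, φ x =
      (∑ i : Fin k, a i * x ^ (Fintype.card Fq) ^ (i : ℕ)) +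
        η * (a ⟨0, hk1⟩) ^ (Fintype.card Fq) ^ r * x ^ (Fintype.card Fq) ^ k) :
    n - k + 1 ≤ Module.finrank Fq (LinearMap.range φ) := by
  classical
  obtain ⟨q, hqdef⟩ : ∃ q, q = Fintype.card Fq := ⟨_, rfl⟩
  rw [← hqdef] at hη hφ
  have hq2 : 2 ≤ q := by rw [hqdef]; exact Fintype.one_lt_card
  have hq1' : 1 < q := hq2
  have hn1 : 0 < n := by omega
  have hcard : Fintype.card Fqn = q ^ n := by
    rw [← hn, hqdef]; exact Module.card_eq_pow_finrank
  set a0 : Fqn := a ⟨0, hk1⟩ with ha0def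
  set c : Fqn := η * a0 ^ q ^ r with hcdef
  set g1 : Polynomial Fqn := ∑ i : Fin k, Polynomial.C (a i) * Polynomial.X ^ q ^ (i : ℕ)
    with hg1def
  set f : Polynomial Fqn := g1 + Polynomial.C c * Polynomial.X ^ q ^ k with hfdef
  have hg1coeff : ∀ j : Fin k, g1.coeff (q ^ (j : ℕ)) = a j := by
    intro j
    rw [hg1def, Polynomial.finset_sum_coeff]
    rw [Finset.sum_eq_single j]
    · simp [Polynomial.coeff_C_mul, Polynomial.coeff_X_pow]
    · intro i _ hij
      rw [Polynomial.coeff_C_mul, Polynomial.coeff_X_pow, if_neg, mul_zero]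
      intro h
      exact hij (Fin.ext (Nat.pow_right_injective hq2 h.symm))
    · intro h
      exact absurd (Finset.mem_univ j) h
  have hg1deg : g1.natDegree ≤ q ^ (k - 1) := by
    rw [hg1def]
    apply Polynomial.natDegree_sum_le_of_forall_le
    intro i _
    refine le_trans (Polynomial.natDegree_C_mul_X_pow_le _ _) ?_
    exact Nat.pow_le_pow_right (by omega) (by omega)
  have hqpow_lt : q ^ (k - 1) < q ^ k := Nat.pow_lt_pow_right hq1' (by omega)
  have heval : ∀ x, f.eval x = φ x := by
    intro x
    rw [hφ x, hfdef, hg1def]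
    simp [Polynomial.eval_finset_sum, hcdef, mul_assoc]
  set Kf : Finset Fqn := Set.toFinset ((LinearMap.ker φ : Submodule Fq Fqn) : Set Fqn)
    with hKfdef
  have hmemKf : ∀ x : Fqn, x ∈ Kf ↔ φ x = 0 := by
    intro x
    rw [hKfdef, Set.mem_toFinset, SetLike.mem_coe, LinearMap.mem_ker]
  set d : ℕ := Module.finrank Fq (LinearMap.ker φ) with hddef
  have hrank : Module.finrank Fq (LinearMap.range φ) + d = n := by
    rw [hddef, ← hn]; exact LinearMap.finrank_range_add_finrank_ker φ
  have hcardKf : Kf.card = q ^ d := by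
    rw [hKfdef, Set.toFinset_card]
    simp only [SetLike.coe_sort_coe]
    rw [hqdef, hddef]
    exact Module.card_eq_pow_finrank
  rcases Nat.lt_or_ge d k with hdk | hdk
  · omega
  exfalso
  have hqdk : q ^ k ≤ q ^ d := Nat.pow_le_pow_right (by omega) hdk
  have hroot : ∀ x ∈ Kf, f.eval x = 0 := by
    intro x hx
    rw [heval x]
    exact (hmemKf x).mp hx
  by_cases hc0 : c = 0
  · -- low degree case
    have hf0 : f = g1 := by rw [hfdef, hc0, map_zero, zero_mul, add_zero]
    obtain ⟨j, hj⟩ := Function.ne_iff.mp ha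
    have hfne : f ≠ 0 := by
      intro h
      apply hj
      have h2 := hg1coeff j
      rw [← hf0, h, Polynomial.coeff_zero] at h2
      exact h2.symm
    have hsub : Kf ⊆ f.roots.toFinset := by
      intro x hx
      rw [Multiset.mem_toFinset, Polynomial.mem_roots hfne]
      exact hroot x hx
    have hchain : q ^ d ≤ q ^ (k - 1) := by
      calc q ^ d = Kf.card := hcardKf.symm
        _ ≤ f.roots.toFinset.card := Finset.card_le_card hsub
        _ ≤ Multiset.card f.roots := Multiset.toFinset_card_le _
        _ ≤ f.natDegree := f.card_roots'
        _ ≤ q ^ (k - 1) := by rw [hf0]; exact hg1deg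
    omega
  · -- full degree case
    have hdegterm : (Polynomial.C c * Polynomial.X ^ q ^ k).natDegree = q ^ k :=
      Polynomial.natDegree_C_mul_X_pow _ _ hc0
    have hg1lt : g1.natDegree < (Polynomial.C c * Polynomial.X ^ q ^ k).natDegree := by
      rw [hdegterm]; exact lt_of_le_of_lt hg1deg hqpow_lt
    have hfdeg : f.natDegree = q ^ k := by
      rw [hfdef, Polynomial.natDegree_add_eq_right_of_natDegree_lt hg1lt, hdegterm]
    have hqk2 : 2 ≤ q ^ k := le_trans hq2 (Nat.le_self_pow (by omega) q)
    have hfne : f ≠ 0 := by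
      intro h
      rw [h, Polynomial.natDegree_zero] at hfdeg
      omega
    have hsub : Kf ⊆ f.roots.toFinset := by
      intro x hx
      rw [Multiset.mem_toFinset, Polynomial.mem_roots hfne]
      exact hroot x hx
    have hchain1 : Kf.card ≤ Multiset.card f.roots :=
      le_trans (Finset.card_le_card hsub) (Multiset.toFinset_card_le _)
    have hchain2 : Multiset.card f.roots ≤ q ^ k := by
      rw [← hfdeg]; exact f.card_roots'
    have hd_eq : d = k := by
      refine (Nat.pow_right_injective hq2 (show q ^ k = q ^ d from ?_)).symm
      omega
    have hKfval : Kf.val ≤ f.roots := by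
      rw [Multiset.le_iff_subset Kf.nodup]
      intro x hx
      rw [Polynomial.mem_roots hfne]
      exact hroot x (by rwa [← Finset.mem_val])
    have hroots_eq : Kf.val = f.roots := by
      refine Multiset.eq_of_le_of_card_le hKfval ?_
      have : Multiset.card Kf.val = Kf.card := rfl
      omega
    have hroots_card : Multiset.card f.roots = f.natDegree := by
      rw [← hroots_eq, hfdeg]
      have : Multiset.card Kf.val = Kf.card := rfl
      omega
    have hfactor := Polynomial.C_leadingCoeff_mul_prod_multiset_X_sub_C hroots_card
    have hlc : f.leadingCoeff = c := by
      rw [Polynomial.leadingCoeff, hfdeg, hfdef, Polynomial.coeff_add,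
        Polynomial.coeff_C_mul, Polynomial.coeff_X_pow, if_pos rfl, mul_one,
        Polynomial.coeff_eq_zero_of_natDegree_lt (lt_of_le_of_lt hg1deg hqpow_lt), zero_add]
    -- membership of 0 and the punctured kernel
    have h0Kf : (0 : Fqn) ∈ Kf := (hmemKf 0).mpr (map_zero φ)
    set S : Finset Fqn := Kf.erase 0 with hSdef
    have hcardS : S.card = q ^ k - 1 := by
      rw [hSdef, Finset.card_erase_of_mem h0Kf, hcardKf, hd_eq]
    have hmemS : ∀ u : Fqn, u ∈ S ↔ u ∈ LinearMap.ker φ ∧ u ≠ 0 := by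
      intro u
      rw [hSdef, Finset.mem_erase, hmemKf u, LinearMap.mem_ker]
      tauto
    -- coefficient of X^1 on both sides
    have hfcoeff1 : f.coeff 1 = a0 := by
      have h1 : g1.coeff 1 = a0 := by
        have h2 := hg1coeff ⟨0, hk1⟩
        simpa using h2
      rw [hfdef, Polynomial.coeff_add, Polynomial.coeff_C_mul, Polynomial.coeff_X_pow,
        if_neg (by omega : ¬ (1 : ℕ) = q ^ k), mul_zero, add_zero, h1]
    set P : Polynomial Fqn := ∏ u ∈ S, (Polynomial.X - Polynomial.C u) with hPdef
    have hfactS : f = Polynomial.C c * (Polynomial.X * P) := by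
      have hmprod : (Kf.val.map fun u => Polynomial.X - Polynomial.C u).prod =
          ∏ u ∈ Kf, (Polynomial.X - Polynomial.C u) := rfl
      rw [← hfactor, hlc, hroots_eq.symm, hmprod,
        ← Finset.mul_prod_erase Kf _ h0Kf, map_zero, sub_zero, ← hSdef, ← hPdef]
    have hPcoeff0 : P.coeff 0 = ∏ u ∈ S, (-u) := by
      rw [Polynomial.coeff_zero_eq_eval_zero, hPdef, Polynomial.eval_prod]
      refine Finset.prod_congr rfl fun u _ => ?_
      simp
    have hXP1 : (Polynomial.X * P).coeff 1 = P.coeff 0 := by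
      simpa using Polynomial.coeff_X_mul P 0
    have hsign : (-1 : Fqn) ^ (q ^ k - 1) = 1 := by
      have hE1 : (-1 : Fqn) ^ (q ^ n - 1) = 1 := by
        rw [← hcard]
        exact FiniteField.pow_card_sub_one_eq_one (-1) (neg_ne_zero.mpr one_ne_zero)
      refine Eq.trans (tg_neg_one_pow_congr ?_) hE1
      have hqk1 : 1 ≤ q ^ k := Nat.one_le_pow _ _ (by omega)
      have hqn1 : 1 ≤ q ^ n := Nat.one_le_pow _ _ (by omega)
      rcases Nat.even_or_odd q with he | ho
      · have h1 : q ^ k % 2 = 0 := Nat.even_iff.mp ((Nat.even_pow).mpr ⟨he, by omega⟩)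
        have h2 : q ^ n % 2 = 0 := Nat.even_iff.mp ((Nat.even_pow).mpr ⟨he, by omega⟩)
        omega
      · have h1 : q ^ k % 2 = 1 := Nat.odd_iff.mp ho.pow
        have h2 : q ^ n % 2 = 1 := Nat.odd_iff.mp ho.pow
        omega
    set e : Fqn := ∏ u ∈ S, u with hedef
    have hprodneg : ∏ u ∈ S, (-u) = e := by
      have h3 : ∏ u ∈ S, (-u) = (-1 : Fqn) ^ S.card * e := by
        rw [hedef, ← Finset.prod_const, ← Finset.prod_mul_distrib]
        exact Finset.prod_congr rfl fun u _ => (neg_one_mul u).symm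
      rw [h3, hcardS, hsign, one_mul]
    have ha0e : a0 = c * e := by
      rw [← hfcoeff1, hfactS, Polynomial.coeff_C_mul, hXP1, hPcoeff0, hprodneg]
    -- norms
    set E : ℕ := ∑ i ∈ Finset.range n, q ^ i with hEdef
    have hnormE : e ^ E = (-1 : Fqn) ^ (n * k) := by
      rw [hedef, hEdef]
      exact tg_norm_sub_prod hqdef hn1 hcard (LinearMap.ker φ)
        (by rw [← hddef, hd_eq]) S hmemS hcardS
    have he0 : e ≠ 0 := by
      rw [hedef]
      refine Finset.prod_ne_zero_iff.mpr fun u hu => ?_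
      exact ((hmemS u).mp hu).2
    have ha0ne : a0 ≠ 0 := by
      rw [ha0e]
      exact mul_ne_zero hc0 he0
    have haE : a0 ^ E ≠ 0 := pow_ne_zero _ ha0ne
    have hfrob0 : (a0 ^ E) ^ q = a0 ^ E := by
      rw [hEdef]
      exact tg_frob (by omega) hcard ha0ne
    have hfix : (a0 ^ E) ^ q ^ r = a0 ^ E := tg_fix_pow hfrob0 r
    have heq : a0 ^ E = η ^ E * a0 ^ E * (-1 : Fqn) ^ (n * k) := by
      conv_lhs => rw [ha0e]
      rw [mul_pow, hcdef, mul_pow, hnormE]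
      congr 1
      congr 1
      rw [← pow_mul, mul_comm (q ^ r) E, pow_mul]
      exact hfix
    have h5 : η ^ E * (-1 : Fqn) ^ (n * k) = 1 := by
      refine mul_left_cancel₀ haE ?_
      rw [mul_one]
      calc a0 ^ E * (η ^ E * (-1 : Fqn) ^ (n * k))
          = η ^ E * a0 ^ E * (-1 : Fqn) ^ (n * k) := by ring
        _ = a0 ^ E := heq.symm
    have h7 : ((-1 : Fqn) ^ (n * k)) * ((-1 : Fqn) ^ (n * k)) = 1 := by
      rw [← pow_add]
      exact Even.neg_one_pow ⟨n * k, by ring⟩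
    have hηE : η ^ E = (-1 : Fqn) ^ (n * k) := by
      calc η ^ E = η ^ E * (((-1 : Fqn) ^ (n * k)) * ((-1 : Fqn) ^ (n * k))) := by
            rw [h7, mul_one]
        _ = (η ^ E * (-1 : Fqn) ^ (n * k)) * (-1 : Fqn) ^ (n * k) := by ring
        _ = (-1 : Fqn) ^ (n * k) := by rw [h5, one_mul]
    apply hη
    rw [Finset.prod_pow_eq_pow_sum, ← hEdef]
    exact hηE
end

section
/- Let 0 ≤ k ≤ n and let t be a nonnegative integer with 2t < n − k + 1. Suppose g(x) = Σ_{i=0}^{n−1} g_i x^{q^i} and g'(x) = Σ_{i=0}^{n−1} g'_i x^{q^i} are linearized polynomials over F_{q^n} whose associated F_q-linear maps each have rank at most t, and suppose g_i = g'_i for all i with k ≤ i ≤ n−1. Then g_i = g'_i for all i, i.e., g = g'. (Hence an error polynomial of rank t < (n−k+1)/2 is uniquely determined by its coefficients of x^{q^k}, ..., x^{q^{n−1}}.) -/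
/-- Unique reconstruction of low-rank error polynomials from high coefficients:
if `g` and `g'` are linearized polynomials `Σ_{i<n} g_i x^{q^i}` over `F_{q^n}` whose
associated `F_q`-linear maps have rank at most `t` with `2t < n - k + 1` (`0 ≤ k ≤ n`),
and `g_i = g'_i` for all `k ≤ i ≤ n-1`, then `g = g'`. -/
theorem low_rank_linearized_poly_determined_by_high_coeffs
    (Fq Fqn : Type*) [Field Fq] [Fintype Fq] [Field Fqn] [Fintype Fqn]
    [Algebra Fq Fqn] (n k t : ℕ) (hn : Module.finrank Fq Fqn = n)
    (hkn : k ≤ n) (ht : 2 * t < n - k + 1)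
    (g g' : Fin n → Fqn) (φ φ' : Fqn →ₗ[Fq] Fqn)
    (hφ : ∀ x : Fqn, φ x = ∑ i : Fin n, g i * x ^ (Fintype.card Fq) ^ (i : ℕ))
    (hφ' : ∀ x : Fqn, φ' x = ∑ i : Fin n, g' i * x ^ (Fintype.card Fq) ^ (i : ℕ))
    (hr : Module.finrank Fq (LinearMap.range φ) ≤ t)
    (hr' : Module.finrank Fq (LinearMap.range φ') ≤ t)
    (hcoef : ∀ i : Fin n, k ≤ (i : ℕ) → g i = g' i) :
    g = g' := by
  classical
  set q := Fintype.card Fq with hq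
  have hq1 : 1 < q := Fintype.one_lt_card
  set δ : Fin n → Fqn := fun i => g i - g' i with hδ
  have hδ0 : ∀ i : Fin n, k ≤ (i : ℕ) → δ i = 0 := by
    intro i hi; simp [hδ, hcoef i hi]
  suffices hall : ∀ i : Fin n, δ i = 0 by
    funext i; have := hall i; simp [hδ, sub_eq_zero] at this; exact this
  set ψ : Fqn →ₗ[Fq] Fqn := φ - φ' with hψdef
  have hψ : ∀ x : Fqn, ψ x = ∑ i : Fin n, δ i * x ^ q ^ (i : ℕ) := by
    intro x
    simp [hψdef, hφ, hφ', hδ, sub_mul, Finset.sum_sub_distrib]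
  -- rank bound
  have hrange : LinearMap.range ψ ≤ LinearMap.range φ ⊔ LinearMap.range φ' := by
    rintro y ⟨x, rfl⟩
    have : ψ x = φ x - φ' x := rfl
    rw [this, sub_eq_add_neg]
    exact Submodule.add_mem _ (Submodule.mem_sup_left ⟨x, rfl⟩)
      (Submodule.mem_sup_right (neg_mem ⟨x, rfl⟩))
  have hrψ : Module.finrank Fq (LinearMap.range ψ) ≤ 2 * t := by
    calc Module.finrank Fq (LinearMap.range ψ)
        ≤ Module.finrank Fq ↥(LinearMap.range φ ⊔ LinearMap.range φ') :=
          Submodule.finrank_mono hrange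
      _ ≤ Module.finrank Fq (LinearMap.range φ) +
            Module.finrank Fq (LinearMap.range φ') :=
          Submodule.finrank_add_le_finrank_add_finrank _ _
      _ ≤ 2 * t := by omega
  have hrn : Module.finrank Fq (LinearMap.range ψ) +
      Module.finrank Fq (LinearMap.ker ψ) = n := by
    rw [← hn]; exact LinearMap.finrank_range_add_finrank_ker ψ
  have hker : k ≤ Module.finrank Fq (LinearMap.ker ψ) := by omega
  -- case k = 0 handled uniformly: if k = 0, all δ i = 0 by hδ0
  by_cases hk0 : k = 0
  · intro i; exact hδ0 i (by omega)
  -- polynomial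
  by_contra hne
  push_neg at hne
  obtain ⟨j, hj⟩ := hne
  set P : Polynomial Fqn := ∑ i : Fin n, Polynomial.C (δ i) * Polynomial.X ^ (q ^ (i : ℕ)) with hP
  have hcoeffP : ∀ i : Fin n, P.coeff (q ^ (i : ℕ)) = δ i := by
    intro i
    rw [hP, Polynomial.finset_sum_coeff]
    rw [Finset.sum_eq_single i]
    · simp
    · intro b _ hbi
      rw [Polynomial.coeff_C_mul, Polynomial.coeff_X_pow, if_neg, mul_zero]
      intro h
      exact hbi (Fin.ext (Nat.pow_right_injective hq1 h.symm))
    · simp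
  have hPne : P ≠ 0 := by
    intro h
    apply hj
    rw [← hcoeffP j, h, Polynomial.coeff_zero]
  have hdeg : P.natDegree ≤ q ^ (k - 1) := by
    rw [hP]
    apply Polynomial.natDegree_sum_le_of_forall_le
    intro i _
    by_cases hik : (i : ℕ) < k
    · calc (Polynomial.C (δ i) * Polynomial.X ^ (q ^ (i : ℕ))).natDegree
          ≤ q ^ (i : ℕ) := by
            apply le_trans (Polynomial.natDegree_mul_le)
            simp
      _ ≤ q ^ (k - 1) := Nat.pow_le_pow_right (by omega) (by omega)
    · rw [hδ0 i (by omega)]; simp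
  have heval : ∀ x : Fqn, P.eval x = ψ x := by
    intro x; rw [hψ, hP]; simp [Polynomial.eval_finset_sum]
  -- kernel elements are roots
  have hsub : (LinearMap.ker ψ : Set Fqn).toFinset ⊆ P.roots.toFinset := by
    intro x hx
    rw [Set.mem_toFinset] at hx
    rw [Multiset.mem_toFinset]
    exact (Polynomial.mem_roots hPne).mpr (by rw [Polynomial.IsRoot, heval x, LinearMap.mem_ker.mp hx])
  have hcardker : Fintype.card (LinearMap.ker ψ) = q ^ Module.finrank Fq (LinearMap.ker ψ) := by
    rw [hq]; exact Module.card_eq_pow_finrank (K := Fq)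
  have hle : q ^ k ≤ q ^ (k - 1) := by
    calc q ^ k ≤ q ^ Module.finrank Fq (LinearMap.ker ψ) :=
          Nat.pow_le_pow_right (by omega) hker
      _ = Fintype.card (LinearMap.ker ψ) := hcardker.symm
      _ = Fintype.card ((LinearMap.ker ψ : Set Fqn)) := Fintype.card_congr (Equiv.refl _)
      _ = (LinearMap.ker ψ : Set Fqn).toFinset.card := (Set.toFinset_card _).symm
      _ ≤ P.roots.toFinset.card := Finset.card_le_card hsub
      _ ≤ P.roots.card := Multiset.toFinset_card_le _
      _ ≤ P.natDegree := Polynomial.card_roots' P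
      _ ≤ q ^ (k - 1) := hdeg
  have : q ^ (k - 1) < q ^ k := Nat.pow_lt_pow_right hq1 (by omega)
  omega
end

section
/- Let a, b, y_2 ∈ F_{q^n} and let l be a positive integer. If y_2 satisfies y_2^{q^l+1} + a·y_2 + b = 0 and y_1 = −a − y_2^{q^l}, then b = y_1·y_2 and for all x ∈ F_{q^n}, x^{q^{2l}} + a·x^{q^l} + b·x = (x^{q^l} − y_2 x)^{q^l} − y_1·(x^{q^l} − y_2 x); that is, the linearized polynomial x^{q^{2l}} + a x^{q^l} + b x equals the composition (x^{q^l} − y_1 x) ∘ (x^{q^l} − y_2 x). -/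
/-- If `y₂` is a root of `X^{q^l+1} + aX + b` and `y₁ = -a - y₂^{q^l}`, then `b = y₁·y₂`
and the linearized polynomial `x^{q^{2l}} + a x^{q^l} + b x` equals the composition
`(x^{q^l} - y₁ x) ∘ (x^{q^l} - y₂ x)`. -/
theorem linearized_quadratic_factorization_of_root
    (Fq Fqn : Type*) [Field Fq] [Fintype Fq] [Field Fqn] [Fintype Fqn]
    [Algebra Fq Fqn] (l : ℕ) (hl : 0 < l) (a b y₁ y₂ : Fqn)
    (hroot : y₂ ^ ((Fintype.card Fq) ^ l + 1) + a * y₂ + b = 0)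
    (hy₁ : y₁ = -a - y₂ ^ (Fintype.card Fq) ^ l) :
    b = y₁ * y₂ ∧ ∀ x : Fqn,
      x ^ (Fintype.card Fq) ^ (2 * l) + a * x ^ (Fintype.card Fq) ^ l + b * x =
        (x ^ (Fintype.card Fq) ^ l - y₂ * x) ^ (Fintype.card Fq) ^ l -
          y₁ * (x ^ (Fintype.card Fq) ^ l - y₂ * x) := by
  obtain ⟨p, hpc⟩ := CharP.exists Fq
  haveI : Fact p.Prime := ⟨CharP.char_is_prime Fq p⟩
  haveI : CharP Fqn p := charP_of_injective_algebraMap (algebraMap Fq Fqn).injective p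
  obtain ⟨m, hm⟩ := FiniteField.card Fq p
  have hq : Fintype.card Fq ^ l = p ^ (m * l) := by
    rw [hm.2, ← pow_mul]
  have hb : b = y₁ * y₂ := by
    subst hy₁
    have : y₂ ^ ((Fintype.card Fq) ^ l + 1) = y₂ ^ (Fintype.card Fq) ^ l * y₂ := by
      rw [pow_succ]
    linear_combination hroot - this
  refine ⟨hb, fun x => ?_⟩
  have hfrob : (x ^ (Fintype.card Fq) ^ l - y₂ * x) ^ (Fintype.card Fq) ^ l =
      (x ^ (Fintype.card Fq) ^ l) ^ (Fintype.card Fq) ^ l -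
        (y₂ * x) ^ (Fintype.card Fq) ^ l := by
    rw [hq]
    exact sub_pow_char_pow (R := Fqn) _ _ _
  rw [hfrob, ← pow_mul, mul_pow, hb, hy₁]
  have h2 : Fintype.card Fq ^ l * Fintype.card Fq ^ l = Fintype.card Fq ^ (2 * l) := by
    rw [← pow_add, two_mul]
  rw [h2]
  ring
end
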